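/- arXiv:1402.5193 — 3 statements merged into one kernel-verified Lean document; each statement's English description precedes it below -/
import Mathlib

section
/- Let c ∈ ℕ₀ and 0 ≤ j ≤ ν. Let s_0,…,s_μ ∈ R and let δ_G ∈ (π_M, ε)·I'_G, where I'_G is the ideal of O_M[[ε]] generated by π_M^{φ̃^k_{M/L}(c)} ε^{p^k} for 0 ≤ k ≤ μ. Set u = π_L/π_M^m ∈ O_M^×. Then π_L^{i_j} · ( Σ_{k=0}^{μ} s_k π_M^{φ̃^k_{M/L}(c)} ε^{p^k} + δ_G )^{p^j} ≡ u^{i_j} Σ_{k=0}^{μ} s_k^{p^j} π_M^{φ̃^{j,m}_{L/K}(φ̃^k_{M/L}(c))} ε^{p^{j+k}} modulo (π_M, ε)·I_{FG}, where I_{FG} is the ideal of O_M[[ε]] generated by π_M^{λ^g_{M/K}(c)} ε^{p^g} for 0 ≤ g ≤ ν+μ. -/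
noncomputable section

/-- The additive valuation (with respect to powers of the prime element `π`) of an
element `x` of a discrete valuation ring: the largest `k` with `x ∈ (π^k)`
(`⊤` if `x = 0`). -/
def piVal {A : Type*} [CommRing A] (π : A) (x : A) : ℕ∞ :=
  ⨆ k ∈ {k : ℕ | x ∈ Ideal.span {π ^ k}}, (k : ℕ∞)

/-- `ĩ_j = min {h ≥ 0 : v_p(h+n) ≤ j, a_h ≠ 0}` (`⊤` if no such `h` exists). -/
def itilde (p n : ℕ) {OK : Type*} [CommRing OK] (aF : ℕ → OK) (j : ℕ) : ℕ∞ :=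
  ⨅ h ∈ {h : ℕ | padicValNat p (h + n) ≤ j ∧ aF h ≠ 0}, (h : ℕ∞)

/-- The `j`-th index of inseparability (closed form):
`i_j = min {ĩ_{j₁} + (j₁−j)·v(p) : j ≤ j₁ ≤ ν}`. -/
def insepIdx (p n ν : ℕ) {OK : Type*} [CommRing OK] (aF : ℕ → OK) (vLp : ℕ∞) (j : ℕ) : ℕ∞ :=
  ⨅ j1 ∈ Set.Icc j ν, (itilde p n aF j1 + ((j1 - j : ℕ) : ℕ∞) * vLp)

/-- The generalized Hasse–Herbrand function
`φ^l(x) = min {i_{l₀} + p^{l₀} x : 0 ≤ l₀ ≤ l}` attached to indices `iL`. -/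
def hhPhi (p : ℕ) (iL : ℕ → ℕ) (l : ℕ) (x : ℝ) : ℝ :=
  sInf {y : ℝ | ∃ l0 ≤ l, y = iL l0 + (p : ℝ) ^ l0 * x}

/-- `λ^l_{M/K}(x) = min {φ̃^{j,m}_{L/K}(φ̃^k_{M/L}(x)) : (j,k) ∈ Ω_{l₀}, l₀ ≤ l}`, where
`φ̃^{j,m}_{L/K}(y) = m·i_j + p^j y` and `φ̃^k_{M/L}(x) = i'_k + p^k x`. -/
def lamMK (p m : ℕ) (iL iM : ℕ → ℕ) (ν μ l : ℕ) (x : ℝ) : ℝ :=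
  sInf {y : ℝ | ∃ j k : ℕ, j ≤ ν ∧ k ≤ μ ∧ j + k ≤ l ∧
    y = (m : ℝ) * iL j + (p : ℝ) ^ j * ((iM k : ℝ) + (p : ℝ) ^ k * x)}

/-- `S_l^a(x) = {(j,k) ∈ Ω_a : φ̃^{j,m}_{L/K}(φ̃^k_{M/L}(x)) = λ^l_{M/K}(x)}`. -/
def sSetMK (p m : ℕ) (iL iM : ℕ → ℕ) (ν μ l a : ℕ) (x : ℝ) : Set (ℕ × ℕ) :=
  {jk : ℕ × ℕ | jk.1 ≤ ν ∧ jk.2 ≤ μ ∧ jk.1 + jk.2 = a ∧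
    (m : ℝ) * iL jk.1 + (p : ℝ) ^ jk.1 * ((iM jk.2 : ℝ) + (p : ℝ) ^ jk.2 * x)
      = lamMK p m iL iM ν μ l x}

/-- `λ^g_{M/K}(c)` at a nonnegative integer `c` (a natural number):
`min {m·i_j + p^j·(i'_k + p^k c) : (j,k) ∈ Ω_{g₀}, g₀ ≤ g}`. -/
def lamNat (p m : ℕ) (iL iM : ℕ → ℕ) (ν μ g c : ℕ) : ℕ :=
  sInf {t : ℕ | ∃ j k : ℕ, j ≤ ν ∧ k ≤ μ ∧ j + k ≤ g ∧
    t = m * iL j + p ^ j * (iM k + p ^ k * c)}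

/-! Write `y_k = s_k π_M^{φ̃^k(c)} ε^{p^k}` and `π_L = u π_M^m`; the claim is that `π_M^{m i_j}`
kills the error in `(Σ y_k + δ_G)^{p^j} ≡ Σ y_k^{p^j}`. In each of the `j` successive `p`-th powers
an error term either picks up a factor `p` (binomial cross terms) or has the generators of `I'_G`
raised to the `p`-th power, so after `j` steps the error lies in
`Σ_{q ≤ j} p^q · (π_M, ε) · (g^{p^{j-q}} : g generator of I'_G)`. Since
`i_t ≤ i_{t+1} + v_L(p)`, `π_L^{i_{j-q}}` divides `p^q π_L^{i_j}`, and
`π_M^{m i_{j-q}} (π_M^{φ̃^k(c)} ε^{p^k})^{p^{j-q}}` is a multiple of the generator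
`π_M^{λ^{j-q+k}(c)} ε^{p^{j-q+k}}` of `I_FG`. -/

open Finset

theorem mul_mem_of_mem_span {A : Type*} [CommRing A] {c f : A} {T : Set A} {J : Ideal A}
    (hT : ∀ t ∈ T, c * t ∈ J) (hf : f ∈ Ideal.span T) : c * f ∈ J :=
  (Submodule.span_le (p := Submodule.comap (LinearMap.mulLeft A c) J)).2 hT hf

section FrobeniusError

variable {A : Type*} [CommRing A] (p : ℕ) (𝔪 : Ideal A) (S : Set A)

def frobeniusSpan (h : ℕ) : Ideal A :=
  Ideal.span ((· ^ p ^ h) '' S)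

def frobeniusErrorIdeal (h : ℕ) : Ideal A :=
  Ideal.span {f | ∃ q ≤ h, ∃ x ∈ 𝔪, ∃ g ∈ S, f = (p : A) ^ q * x * g ^ p ^ (h - q)}

variable {p 𝔪 S}

theorem frobeniusSpan_le (hp : 0 < p) (hS : S ⊆ 𝔪) (h : ℕ) :
    frobeniusSpan p S h ≤ 𝔪 :=
  Ideal.span_le.2 fun _ ⟨_, hg, hgh⟩ => hgh ▸ Ideal.pow_mem_of_mem _ (hS hg) _ (pow_pos hp h)

theorem mul_span_le_frobeniusErrorIdeal_zero : 𝔪 * Ideal.span S ≤ frobeniusErrorIdeal p 𝔪 S 0 :=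
  Ideal.mul_le.2 fun x hx _ hy =>
    mul_mem_of_mem_span (fun g hg => Ideal.subset_span ⟨0, le_rfl, x, hx, g, hg, by simp⟩) hy

theorem natCast_mul_mem_frobeniusErrorIdeal_succ {h : ℕ} {f : A}
    (hf : f ∈ frobeniusErrorIdeal p 𝔪 S h) : (p : A) * f ∈ frobeniusErrorIdeal p 𝔪 S (h + 1) := by
  refine mul_mem_of_mem_span (fun t ht => ?_) hf
  obtain ⟨q, hq, x, hx, g, hg, rfl⟩ := ht
  exact Ideal.subset_span ⟨q + 1, by omega, x, hx, g, hg, by rw [Nat.add_sub_add_right]; ring⟩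

theorem natCast_mul_mul_mem_frobeniusErrorIdeal_succ {h : ℕ} {x y : A} (hx : x ∈ 𝔪)
    (hy : y ∈ frobeniusSpan p S h) : (p : A) * x * y ∈ frobeniusErrorIdeal p 𝔪 S (h + 1) := by
  refine mul_mem_of_mem_span (fun t ht => ?_) hy
  obtain ⟨g, hg, rfl⟩ := ht
  exact Ideal.subset_span ⟨1, by omega, x, hx, g, hg, by rw [Nat.add_sub_cancel, pow_one]⟩

theorem pow_mem_frobeniusErrorIdeal_succ (hp : p.Prime) {h : ℕ} {f : A}
    (hf : f ∈ frobeniusErrorIdeal p 𝔪 S h) : f ^ p ∈ frobeniusErrorIdeal p 𝔪 S (h + 1) := by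
  induction hf using Submodule.span_induction with
  | mem f hf =>
    obtain ⟨q, hq, x, hx, g, hg, rfl⟩ := hf
    have hpq : ((p : A) ^ q) ^ p = (p : A) ^ q * ((p : A) ^ q) ^ (p - 1) := by
      rw [← pow_succ', Nat.sub_add_cancel hp.one_le]
    refine Ideal.subset_span ⟨q, by omega, ((p : A) ^ q) ^ (p - 1) * x ^ p,
      Ideal.mul_mem_left _ _ (Ideal.pow_mem_of_mem _ hx _ hp.pos), g, hg, ?_⟩
    rw [show h + 1 - q = h - q + 1 by omega, pow_succ, pow_mul, mul_pow, mul_pow, hpq]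
    ring
  | zero => rw [zero_pow hp.ne_zero]; exact zero_mem _
  | add x y hx _ ihx ihy =>
    obtain ⟨r, hr⟩ := exists_add_pow_prime_eq hp x y
    rw [hr, mul_assoc _ y, mul_comm y]
    exact add_mem (add_mem ihx ihy)
      (Ideal.mul_mem_right _ _ (natCast_mul_mem_frobeniusErrorIdeal_succ hx))
  | smul r x _ ihx => rw [smul_eq_mul, mul_pow]; exact Ideal.mul_mem_left _ _ ihx

theorem sum_pow_sub_sum_pow_mem_frobeniusErrorIdeal (hp : p.Prime) (hS : S ⊆ 𝔪) {h : ℕ}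
    {ι : Type*} (s : Finset ι) (z : ι → A) (hz : ∀ k ∈ s, z k ∈ frobeniusSpan p S h) :
    (∑ k ∈ s, z k) ^ p - ∑ k ∈ s, z k ^ p ∈ frobeniusErrorIdeal p 𝔪 S (h + 1) := by
  classical
  induction s using Finset.induction_on with
  | empty => simp [zero_pow hp.ne_zero]
  | insert a s ha ih =>
    rw [sum_insert ha, sum_insert ha]
    obtain ⟨r, hr⟩ := exists_add_pow_prime_eq hp (z a) (∑ k ∈ s, z k)
    rw [hr, show ∀ x y w v : A, x + y + w - (x + v) = (y - v) + w by intros; ring]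
    refine add_mem (ih fun k hk => hz k (mem_insert_of_mem hk)) (Ideal.mul_mem_right _ _ ?_)
    refine natCast_mul_mul_mem_frobeniusErrorIdeal_succ
      (frobeniusSpan_le hp.pos hS h (hz a (mem_insert_self a s))) (sum_mem fun k hk => ?_)
    exact hz k (mem_insert_of_mem hk)

theorem sum_add_pow_sub_sum_pow_mem_frobeniusErrorIdeal (hp : p.Prime) (hS : S ⊆ 𝔪) {h : ℕ}
    {ι : Type*} (s : Finset ι) (z : ι → A) (hz : ∀ k ∈ s, z k ∈ frobeniusSpan p S h)
    {Δ : A} (hΔ : Δ ∈ frobeniusErrorIdeal p 𝔪 S h) :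
    (∑ k ∈ s, z k + Δ) ^ p - ∑ k ∈ s, z k ^ p ∈ frobeniusErrorIdeal p 𝔪 S (h + 1) := by
  obtain ⟨r, hr⟩ := exists_add_pow_prime_eq hp (∑ k ∈ s, z k) Δ
  rw [hr, show ∀ x y v : A,
    x ^ p + y ^ p + p * x * y * r - v = (x ^ p - v) + y ^ p + p * y * (x * r) by intros; ring]
  exact add_mem (add_mem (sum_pow_sub_sum_pow_mem_frobeniusErrorIdeal hp hS s z hz)
    (pow_mem_frobeniusErrorIdeal_succ hp hΔ))
    (Ideal.mul_mem_right _ _ (natCast_mul_mem_frobeniusErrorIdeal_succ hΔ))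

theorem sum_add_pow_pow_sub_sum_pow_pow_mem_frobeniusErrorIdeal (hp : p.Prime) (hS : S ⊆ 𝔪)
    {ι : Type*} (s : Finset ι) (b g : ι → A) (hg : ∀ k ∈ s, g k ∈ S) {δ : A}
    (hδ : δ ∈ 𝔪 * Ideal.span S) (h : ℕ) :
    (∑ k ∈ s, b k * g k + δ) ^ p ^ h - ∑ k ∈ s, (b k * g k) ^ p ^ h
      ∈ frobeniusErrorIdeal p 𝔪 S h := by
  induction h with
  | zero => simpa using mul_span_le_frobeniusErrorIdeal_zero hδ
  | succ h ih =>
    have hz : ∀ k ∈ s, (b k * g k) ^ p ^ h ∈ frobeniusSpan p S h := fun k hk =>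
      mul_pow (b k) (g k) _ ▸ Ideal.mul_mem_left _ _ (Ideal.subset_span ⟨g k, hg k hk, rfl⟩)
    have := sum_add_pow_sub_sum_pow_mem_frobeniusErrorIdeal hp hS s _ hz ih
    simpa only [add_sub_cancel, ← pow_mul, ← pow_succ] using this

end FrobeniusError

theorem pow_dvd_of_le_piVal {R : Type*} [CommRing R] {π x : R} {k : ℕ}
    (h : (k : ℕ∞) ≤ piVal π x) : π ^ k ∣ x := by
  cases k with
  | zero => simp
  | succ k =>
    have hlt : (k : ℕ∞) < piVal π x := lt_of_lt_of_le (by exact_mod_cast k.lt_succ_self) h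
    obtain ⟨k', hk', hkk'⟩ := lt_biSup_iff.1 hlt
    exact (pow_dvd_pow π (Nat.succ_le_of_lt (by exact_mod_cast hkk'))).trans
      (Ideal.mem_span_singleton.1 hk')

theorem insepIdx_le_succ_add {p n ν : ℕ} {R : Type*} [CommRing R] (aF : ℕ → R) (v : ℕ∞)
    (t : ℕ) : insepIdx p n ν aF v t ≤ insepIdx p n ν aF v (t + 1) + v := by
  unfold insepIdx
  rw [← tsub_le_iff_right]
  refine le_iInf₂ fun j1 hj1 => ?_
  rw [tsub_le_iff_right]
  have ht : t + 1 ≤ j1 := hj1.1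
  refine (iInf₂_le j1 ⟨by omega, hj1.2⟩).trans_eq ?_
  rw [show j1 - t = j1 - (t + 1) + 1 by omega]
  push_cast
  ring

theorem pow_insepIdx_dvd_natCast_mul {R S : Type*} [CommRing R] [CommRing S] {π : R}
    {p n ν : ℕ} {aF : ℕ → S} {i : ℕ → ℕ}
    (hi : ∀ t ≤ ν, (i t : ℕ∞) = insepIdx p n ν aF (piVal π (p : R)) t) {t : ℕ} (ht : t < ν) :
    π ^ i t ∣ (p : R) * π ^ i (t + 1) := by
  have hle := insepIdx_le_succ_add (p := p) (n := n) (ν := ν) aF (piVal π (p : R)) t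
  rw [← hi t ht.le, ← hi (t + 1) ht] at hle
  have hdvd : π ^ (i t - i (t + 1)) ∣ (p : R) :=
    pow_dvd_of_le_piVal (by rw [ENat.natCast_sub]; exact tsub_le_iff_left.2 hle)
  calc π ^ i t ∣ π ^ (i t - i (t + 1)) * π ^ i (t + 1) := by
        rw [← pow_add]; exact pow_dvd_pow π (by omega)
    _ ∣ (p : R) * π ^ i (t + 1) := mul_dvd_mul_right hdvd _

theorem dvd_pow_mul_of_dvd_mul_succ {M : Type*} [CommMonoid M] {d : M} {g : ℕ → M} {ν : ℕ}
    (hg : ∀ t < ν, g t ∣ d * g (t + 1)) {j : ℕ} (hj : j ≤ ν) {q : ℕ} (hq : q ≤ j) :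
    g (j - q) ∣ d ^ q * g j := by
  induction q with
  | zero => simp
  | succ q ih =>
    have hstep := hg (j - (q + 1)) (by omega)
    rw [show j - (q + 1) + 1 = j - q by omega] at hstep
    calc g (j - (q + 1)) ∣ d * g (j - q) := hstep
      _ ∣ d * (d ^ q * g j) := mul_dvd_mul_left d (ih (by omega))
      _ = d ^ (q + 1) * g j := by rw [pow_succ', mul_assoc]

theorem lamNat_le {p m ν μ c j k : ℕ} {iL iM : ℕ → ℕ} (hj : j ≤ ν) (hk : k ≤ μ) :
    lamNat p m iL iM ν μ (j + k) c ≤ m * iL j + p ^ j * (iM k + p ^ k * c) :=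
  Nat.sInf_le ⟨j, k, hj, hk, le_rfl, rfl⟩

section PowerSeries

open PowerSeries

variable {R : Type*} [CommRing R] (π : R) (p m : ℕ) (iL iM : ℕ → ℕ) (ν μ c : ℕ)

theorem setOf_C_mul_X_pow_subset_span_C_X (hp : 0 < p) (e : ℕ → ℕ) :
    {f : R⟦X⟧ | ∃ k ≤ μ, f = C (π ^ e k) * X ^ p ^ k} ⊆ Ideal.span {C π, X} := by
  rintro _ ⟨k, -, rfl⟩
  have hX : (X : R⟦X⟧) ∈ Ideal.span {C π, X} :=
    Ideal.subset_span (Set.mem_insert_of_mem _ (Set.mem_singleton _))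
  exact Ideal.mul_mem_left _ _ (Ideal.pow_mem_of_mem _ hX _ (pow_pos hp k))

theorem C_mul_X_pow_mem_span_lamNat {a : R} {g : ℕ} (hg : g ≤ ν + μ)
    (ha : π ^ lamNat p m iL iM ν μ g c ∣ a) :
    C a * X ^ p ^ g ∈ Ideal.span {f : R⟦X⟧ | ∃ g ≤ ν + μ,
      f = C (π ^ lamNat p m iL iM ν μ g c) * X ^ p ^ g} := by
  obtain ⟨r, rfl⟩ := ha
  rw [map_mul, mul_right_comm]
  exact Ideal.mul_mem_right _ _ (Ideal.subset_span ⟨g, hg, rfl⟩)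

theorem C_mul_mem_of_mem_frobeniusErrorIdeal {ℓ : R} {j : ℕ} (hj : j ≤ ν)
    (hℓ : ∀ i, π ^ (m * i) ∣ ℓ ^ i) (hdvd : ∀ q ≤ j, ℓ ^ iL (j - q) ∣ (p : R) ^ q * ℓ ^ iL j)
    {f : R⟦X⟧} (hf : f ∈ frobeniusErrorIdeal p (Ideal.span {C π, X})
      {f | ∃ k ≤ μ, f = C (π ^ (iM k + p ^ k * c)) * X ^ p ^ k} j) :
    C (ℓ ^ iL j) * f ∈ Ideal.span {C π, X} *
      Ideal.span {f | ∃ g ≤ ν + μ, f = C (π ^ lamNat p m iL iM ν μ g c) * X ^ p ^ g} := by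
  refine mul_mem_of_mem_span (fun t ht => ?_) hf
  obtain ⟨q, hq, x, hx, _, ⟨k, hk, rfl⟩, rfl⟩ := ht
  have hmono : C (ℓ ^ iL j) *
      ((p : R⟦X⟧) ^ q * x * (C (π ^ (iM k + p ^ k * c)) * X ^ p ^ k) ^ p ^ (j - q))
      = x * (C ((p : R) ^ q * ℓ ^ iL j * π ^ (p ^ (j - q) * (iM k + p ^ k * c))) *
        X ^ p ^ (j - q + k)) := by
    simp only [map_mul, map_pow, map_natCast, mul_pow, ← pow_mul, pow_add]
    ring
  rw [hmono]
  refine Ideal.mul_mem_mul hx (C_mul_X_pow_mem_span_lamNat π p m iL iM ν μ c (by omega) ?_)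
  calc π ^ lamNat p m iL iM ν μ (j - q + k) c
      ∣ π ^ (m * iL (j - q)) * π ^ (p ^ (j - q) * (iM k + p ^ k * c)) := by
        rw [← pow_add]; exact pow_dvd_pow π (lamNat_le (by omega) hk)
    _ ∣ (p : R) ^ q * ℓ ^ iL j * π ^ (p ^ (j - q) * (iM k + p ^ k * c)) :=
        mul_dvd_mul_right ((hℓ _).trans (hdvd q hq)) _

end PowerSeries

open PowerSeries in
theorem stmt13_general
    (p : ℕ) [hp : Fact p.Prime]
    (OK : Type) [CommRing OK]
    (OL : Type) [CommRing OL]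
    (OM : Type) [CommRing OM]
    [Algebra OL OM] [Algebra OK OM]
    -- degrees
    (n ν : ℕ)
    (m μ : ℕ)
    -- uniformizers, total ramification
    (πL : OL)
    (πM : OM)
    -- F̂ : expansion of π_K in π_L, and the indices i_j of L/K
    (aF : ℕ → OK)
    (iL : ℕ → ℕ)
    (hiL : ∀ j ≤ ν, (iL j : ℕ∞) = insepIdx p n ν aF (piVal πL (p : OL)) j)
    -- Ĝ : expansion of π_L in π_M, and the indices i'_k of M/L
    (iM : ℕ → ℕ)
    -- the data of the lemma
    (c : ℕ) (j : ℕ) (hj : j ≤ ν)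
    (s : ℕ → OK)
    (u : OMˣ) (hu : (u : OM) * πM ^ m = algebraMap OL OM πL)
    (δG : PowerSeries OM)
    (hδG : δG ∈ Ideal.span {(C (R := OM)) πM, (X : PowerSeries OM)} *
      Ideal.span {f : PowerSeries OM | ∃ k ≤ μ,
        f = (C (R := OM)) (πM ^ (iM k + p ^ k * c)) * (X : PowerSeries OM) ^ (p ^ k)}) :
    (C (R := OM)) (algebraMap OL OM πL ^ iL j) *
        (∑ k ∈ Finset.range (μ + 1),
            (C (R := OM)) (algebraMap OK OM (s k) * πM ^ (iM k + p ^ k * c)) *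
              (X : PowerSeries OM) ^ (p ^ k) + δG) ^ (p ^ j)
      - (C (R := OM)) ((u : OM) ^ iL j) *
          ∑ k ∈ Finset.range (μ + 1),
            (C (R := OM)) (algebraMap OK OM (s k) ^ (p ^ j) *
                πM ^ (m * iL j + p ^ j * (iM k + p ^ k * c))) *
              (X : PowerSeries OM) ^ (p ^ (j + k))
      ∈ Ideal.span {(C (R := OM)) πM, (X : PowerSeries OM)} *
          Ideal.span {f : PowerSeries OM | ∃ g ≤ ν + μ,
            f = (C (R := OM)) (πM ^ lamNat p m iL iM ν μ g c) *
              (X : PowerSeries OM) ^ (p ^ g)} := by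
  set ℓ := algebraMap OL OM πL
  have hdvd : ∀ q ≤ j, ℓ ^ iL (j - q) ∣ (p : OM) ^ q * ℓ ^ iL j := fun q hq => by
    simpa using map_dvd (algebraMap OL OM) (dvd_pow_mul_of_dvd_mul_succ (g := (πL ^ iL ·))
      (fun t ht => pow_insepIdx_dvd_natCast_mul hiL ht) hj hq)
  have hℓ : ∀ i, πM ^ (m * i) ∣ ℓ ^ i := fun i => ⟨u ^ i, by rw [← hu, mul_pow, pow_mul, mul_comm]⟩
  have hchain := sum_add_pow_pow_sub_sum_pow_pow_mem_frobeniusErrorIdeal hp.out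
    (setOf_C_mul_X_pow_subset_span_C_X πM p μ hp.out.pos _) (range (μ + 1))
    (fun k => C (algebraMap OK OM (s k))) (fun k => C (πM ^ (iM k + p ^ k * c)) * X ^ p ^ k)
    (fun k hk => ⟨k, Nat.lt_succ_iff.1 (mem_range.1 hk), rfl⟩) hδG j
  have hsum : ∑ k ∈ range (μ + 1), C (algebraMap OK OM (s k) * πM ^ (iM k + p ^ k * c)) *
      (X : PowerSeries OM) ^ p ^ k = ∑ k ∈ range (μ + 1),
        C (algebraMap OK OM (s k)) * (C (πM ^ (iM k + p ^ k * c)) * X ^ p ^ k) :=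
    sum_congr rfl fun k _ => by rw [map_mul, mul_assoc]
  have hfrob : C ((u : OM) ^ iL j) * ∑ k ∈ range (μ + 1), C (algebraMap OK OM (s k) ^ p ^ j *
      πM ^ (m * iL j + p ^ j * (iM k + p ^ k * c))) * (X : PowerSeries OM) ^ p ^ (j + k)
      = C (ℓ ^ iL j) * ∑ k ∈ range (μ + 1),
        (C (algebraMap OK OM (s k)) * (C (πM ^ (iM k + p ^ k * c)) * X ^ p ^ k)) ^ p ^ j := by
    rw [mul_sum, mul_sum]
    refine sum_congr rfl fun k _ => ?_
    simp only [ℓ, ← hu, map_mul, map_pow, mul_pow, ← pow_mul, pow_add]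
    ring
  rw [hsum, hfrob, ← mul_sub]
  exact C_mul_mem_of_mem_frobeniusErrorIdeal πM p m iL iM ν μ c hj hℓ hdvd hchain

open PowerSeries in
/-- Lemma `epspower`.  Let `c ∈ ℕ₀` and `0 ≤ j ≤ ν`.  Let
`s_0, …, s_μ ∈ R`, let `δ_G ∈ (π_M, ε)·I'_G` where
`I'_G = (π_M^{φ̃^k_{M/L}(c)} ε^{p^k} : 0 ≤ k ≤ μ)`, and set `u = π_L/π_M^m ∈ O_Mˣ`.
Then
`π_L^{i_j}·(Σ_k s_k π_M^{φ̃^k_{M/L}(c)} ε^{p^k} + δ_G)^{p^j}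
  ≡ u^{i_j} Σ_k s_k^{p^j} π_M^{φ̃^{j,m}_{L/K}(φ̃^k_{M/L}(c))} ε^{p^{j+k}}`
modulo `(π_M, ε)·I_{FG}`, where `I_{FG} = (π_M^{λ^g_{M/K}(c)} ε^{p^g} : 0 ≤ g ≤ ν+μ)`.
(Here `φ̃^k_{M/L}(c) = i'_k + p^k c` and `φ̃^{j,m}_{L/K}(y) = m·i_j + p^j y`.) -/
theorem stmt13
    (p : ℕ) [hp : Fact p.Prime]
    (OK : Type) [CommRing OK] [IsDomain OK] [IsDiscreteValuationRing OK]
    [IsAdicComplete (IsLocalRing.maximalIdeal OK) OK]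
    [CharP (IsLocalRing.ResidueField OK) p] [PerfectRing (IsLocalRing.ResidueField OK) p]
    (OL : Type) [CommRing OL] [IsDomain OL] [IsDiscreteValuationRing OL]
    [IsAdicComplete (IsLocalRing.maximalIdeal OL) OL]
    [Algebra OK OL]
    (OM : Type) [CommRing OM] [IsDomain OM] [IsDiscreteValuationRing OM]
    [IsAdicComplete (IsLocalRing.maximalIdeal OM) OM]
    [Algebra OL OM] [Algebra OK OM] [IsScalarTower OK OL OM]
    (K L M : Type) [Field K] [Field L] [Field M]
    [Algebra OK K] [IsFractionRing OK K]
    [Algebra OL L] [IsFractionRing OL L]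
    [Algebra OM M] [IsFractionRing OM M]
    [Algebra K L] [Algebra OK L] [IsScalarTower OK K L] [IsScalarTower OK OL L]
    [Algebra L M] [Algebra OL M] [IsScalarTower OL L M] [IsScalarTower OL OM M]
    [Algebra K M] [IsScalarTower K L M]
    [Algebra.IsSeparable K L] [FiniteDimensional K L]
    [Algebra.IsSeparable L M] [FiniteDimensional L M]
    [Algebra.IsSeparable K M]
    -- degrees
    (n a ν : ℕ) (hna : n = a * p ^ ν) (hpa : ¬ p ∣ a) (hn1 : 1 < n)
    (hdeg : Module.finrank K L = n)
    (m b μ : ℕ) (hmb : m = b * p ^ μ) (hpb : ¬ p ∣ b) (hm1 : 1 < m)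
    (hdegM : Module.finrank L M = m)
    -- uniformizers, total ramification
    (πK : OK) (hπK : Irreducible πK) (πL : OL) (hπL : Irreducible πL)
    (πM : OM) (hπM : Irreducible πM)
    (htot : Associated (algebraMap OK OL πK) (πL ^ n))
    (hres : ∀ x : OL, ∃ y : OK, x - algebraMap OK OL y ∈ IsLocalRing.maximalIdeal OL)
    (htotM : Associated (algebraMap OL OM πL) (πM ^ m))
    (hresM : ∀ x : OM, ∃ y : OL, x - algebraMap OL OM y ∈ IsLocalRing.maximalIdeal OM)
    -- Teichmüller representatives of O_K and O_L
    (TR : Set OK) (hTR0 : (0 : OK) ∈ TR)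
    (hTRbij : Set.BijOn (IsLocalRing.residue OK) TR Set.univ)
    (hTRmul : ∀ r ∈ TR, ∀ s ∈ TR, r * s ∈ TR)
    (TRL : Set OL) (hTRL0 : (0 : OL) ∈ TRL)
    (hTRLbij : Set.BijOn (IsLocalRing.residue OL) TRL Set.univ)
    (hTRLmul : ∀ r ∈ TRL, ∀ s ∈ TRL, r * s ∈ TRL)
    -- F̂ : expansion of π_K in π_L, and the indices i_j of L/K
    (aF : ℕ → OK) (haF : ∀ h, aF h ∈ TR)
    (hFeval : ∀ N : ℕ,
      algebraMap OK OL πK - ∑ h ∈ Finset.range N, algebraMap OK OL (aF h) * πL ^ (h + n)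
        ∈ Ideal.span {πL ^ (n + N)})
    (iL : ℕ → ℕ)
    (hiL : ∀ j ≤ ν, (iL j : ℕ∞) = insepIdx p n ν aF (piVal πL (p : OL)) j)
    -- Ĝ : expansion of π_L in π_M, and the indices i'_k of M/L
    (aG : ℕ → OL) (haG : ∀ h, aG h ∈ TRL)
    (hGeval : ∀ N : ℕ,
      algebraMap OL OM πL - ∑ h ∈ Finset.range N, algebraMap OL OM (aG h) * πM ^ (h + m)
        ∈ Ideal.span {πM ^ (m + N)})
    (iM : ℕ → ℕ)
    (hiM : ∀ k ≤ μ, (iM k : ℕ∞) = insepIdx p m μ aG (piVal πM (p : OM)) k)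
    -- Ĥ : expansion of π_K in π_M, and the indices i''_l of M/K
    (aH : ℕ → OK) (haH : ∀ h, aH h ∈ TR)
    (hHeval : ∀ N : ℕ,
      algebraMap OK OM πK
          - ∑ h ∈ Finset.range N, algebraMap OK OM (aH h) * πM ^ (h + n * m)
        ∈ Ideal.span {πM ^ (n * m + N)})
    (iMK : ℕ → ℕ)
    (hiMK : ∀ l ≤ ν + μ, (iMK l : ℕ∞) = insepIdx p (n * m) (ν + μ) aH (piVal πM (p : OM)) l)
    -- the data of the lemma
    (c : ℕ) (j : ℕ) (hj : j ≤ ν)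
    (s : ℕ → OK) (hs : ∀ k ≤ μ, s k ∈ TR)
    (u : OMˣ) (hu : (u : OM) * πM ^ m = algebraMap OL OM πL)
    (δG : PowerSeries OM)
    (hδG : δG ∈ Ideal.span {(C (R := OM)) πM, (X : PowerSeries OM)} *
      Ideal.span {f : PowerSeries OM | ∃ k ≤ μ,
        f = (C (R := OM)) (πM ^ (iM k + p ^ k * c)) * (X : PowerSeries OM) ^ (p ^ k)}) :
    (C (R := OM)) (algebraMap OL OM πL ^ iL j) *
        (∑ k ∈ Finset.range (μ + 1),
            (C (R := OM)) (algebraMap OK OM (s k) * πM ^ (iM k + p ^ k * c)) *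
              (X : PowerSeries OM) ^ (p ^ k) + δG) ^ (p ^ j)
      - (C (R := OM)) ((u : OM) ^ iL j) *
          ∑ k ∈ Finset.range (μ + 1),
            (C (R := OM)) (algebraMap OK OM (s k) ^ (p ^ j) *
                πM ^ (m * iL j + p ^ j * (iM k + p ^ k * c))) *
              (X : PowerSeries OM) ^ (p ^ (j + k))
      ∈ Ideal.span {(C (R := OM)) πM, (X : PowerSeries OM)} *
          Ideal.span {f : PowerSeries OM | ∃ g ≤ ν + μ,
            f = (C (R := OM)) (πM ^ lamNat p m iL iM ν μ g c) *
              (X : PowerSeries OM) ^ (p ^ g)} :=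
  stmt13_general p (hp := hp) OK OL OM n ν m μ πL πM aF iL hiL iM c j hj s u hu δG hδG
end
end

section
/- Let 0 ≤ l ≤ ν+μ and suppose there exists l₀ ≤ l such that S_l^{l₀}(0) has exactly one element. Then 0 ∈ T_l(M/K), i.e. there exists l₀' ≤ l with |S_l^{l₀'}(0)| = 1 and |S_l^a(0)| = 0 for all 0 ≤ a < l₀'. -/
/-!
At `x = 0` the value `m·i_j + p^j·i'_k` is antitone in `k`, because the indices `i'_k`
decrease, and on the column `k = μ`, where `i'_μ = 0`, it is antitone in `j`. Hence a minimizer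
on a diagonal `j + k = a` can be pushed to any higher admissible diagonal, along its row or onto
the column `k = μ`. If the lowest nonempty diagonal held two minimizers `(j₁, k₁)`, `(j₂, k₂)`
with `j₁ < j₂`, then `j₂ + k₁ > l`, and pushing them up yields two distinct minimizers on every
higher diagonal up to `l`, so no `S_l^{l₀}(0)` could be a singleton.
-/

noncomputable section

section Indices

variable {p n ν : ℕ} {R : Type*} [CommRing R] {aF : ℕ → R} {v : ℕ∞}

theorem itilde_antitone : Antitone (itilde p n aF) :=
  fun _ _ hjj' => le_iInf₂ fun h hh => iInf₂_le h ⟨hh.1.trans hjj', hh.2⟩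

theorem insepIdx_antitoneOn : AntitoneOn (insepIdx p n ν aF v) (Set.Iic ν) := by
  intro k _ k' hk' hkk'
  refine le_iInf₂ fun j hj => ?_
  rcases le_or_gt k' j with hk'j | hjk'
  · exact (iInf₂_le j ⟨hk'j, hj.2⟩).trans (by gcongr)
  · calc insepIdx p n ν aF v k' ≤ itilde p n aF k' + ((k' - k' : ℕ) : ℕ∞) * v :=
          iInf₂_le k' ⟨le_rfl, hk'⟩
      _ = itilde p n aF k' := by simp
      _ ≤ itilde p n aF j := itilde_antitone hjk'.le
      _ ≤ _ := le_self_add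

theorem insepIdx_self_eq_zero (hn : padicValNat p n ≤ ν) (ha : aF 0 ≠ 0) :
    insepIdx p n ν aF v ν = 0 := by
  refine le_antisymm ?_ zero_le
  calc insepIdx p n ν aF v ν ≤ itilde p n aF ν + ((ν - ν : ℕ) : ℕ∞) * v :=
        iInf₂_le ν ⟨le_rfl, le_rfl⟩
    _ = itilde p n aF ν := by simp
    _ ≤ ((0 : ℕ) : ℕ∞) := iInf₂_le 0 ⟨by simpa using hn, ha⟩
    _ = 0 := Nat.cast_zero

theorem antitoneOn_of_natCast_eq_insepIdx {i : ℕ → ℕ}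
    (hi : ∀ j ≤ ν, (i j : ℕ∞) = insepIdx p n ν aF v j) : AntitoneOn i (Set.Iic ν) :=
  fun j hj j' hj' hjj' => by
    have := insepIdx_antitoneOn (p := p) (n := n) (aF := aF) (v := v) hj hj' hjj'
    rwa [← hi j hj, ← hi j' hj', Nat.cast_le] at this

end Indices

theorem padicValNat_mul_pow_of_not_dvd {p b μ : ℕ} [Fact p.Prime] (hb : ¬ p ∣ b) :
    padicValNat p (b * p ^ μ) = μ := by
  have hb0 : b ≠ 0 := by rintro rfl; exact hb (dvd_zero p)
  rw [padicValNat.mul hb0 (pow_ne_zero _ (Fact.out : p.Prime).ne_zero),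
    padicValNat.eq_zero_of_not_dvd hb, padicValNat.prime_pow, zero_add]

theorem ne_zero_of_sub_mul_pow_mem_span {R : Type*} [CommRing R] [IsDomain R]
    {π x c : R} {m : ℕ} (hπ : Irreducible π) (hx : Associated x (π ^ m))
    (h : x - c * π ^ m ∈ Ideal.span {π ^ (m + 1)}) : c ≠ 0 := by
  rintro rfl
  obtain ⟨d, hd⟩ := Ideal.mem_span_singleton'.mp (by simpa using h)
  obtain ⟨u, hu⟩ := hx
  have : π ^ m * (π * (d * u)) = π ^ m * 1 :=
    calc _ = d * π ^ (m + 1) * u := by ring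
      _ = _ := by rw [hd, hu, mul_one]
  exact hπ.not_isUnit (.of_mul_eq_one _ (mul_left_cancel₀ (pow_ne_zero _ hπ.ne_zero) this))

section Minimizers

variable {p m : ℕ} {iL iM : ℕ → ℕ} {ν μ l : ℕ}

local notation "S" => sSetMK p m iL iM ν μ l

theorem lamMK_le {j k : ℕ} (x : ℝ) (hj : j ≤ ν) (hk : k ≤ μ) (hjk : j + k ≤ l) :
    lamMK p m iL iM ν μ l x ≤ m * iL j + p ^ j * (iM k + p ^ k * x) := by
  refine csInf_le (Set.Finite.bddBelow ?_) ⟨j, k, hj, hk, hjk, rfl⟩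
  refine (((Set.finite_Iic ν).prod (Set.finite_Iic μ)).image fun jk : ℕ × ℕ =>
    (m : ℝ) * iL jk.1 + (p : ℝ) ^ jk.1 * ((iM jk.2 : ℝ) + (p : ℝ) ^ jk.2 * x)).subset ?_
  rintro _ ⟨j, k, hj, hk, -, rfl⟩
  exact ⟨(j, k), ⟨hj, hk⟩, rfl⟩

@[simp]
theorem mem_sSetMK_zero {j k a : ℕ} :
    (j, k) ∈ S a 0 ↔
      j ≤ ν ∧ k ≤ μ ∧ j + k = a ∧ (m * iL j + p ^ j * iM k : ℝ) = lamMK p m iL iM ν μ l 0 := by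
  simp [sSetMK]

theorem mem_sSetMK_zero_of_snd_le (hiM : AntitoneOn iM (Set.Iic μ)) {j k k' a : ℕ}
    (h : (j, k) ∈ S a 0) (hkk' : k ≤ k') (hk' : k' ≤ μ) (hl : j + k' ≤ l) :
    (j, k') ∈ S (j + k') 0 := by
  obtain ⟨hj, hk, -, hval⟩ := mem_sSetMK_zero.mp h
  refine mem_sSetMK_zero.mpr ⟨hj, hk', rfl, le_antisymm ?_ (by simpa using lamMK_le 0 hj hk' hl)⟩
  have : (iM k' : ℝ) ≤ iM k := by exact_mod_cast hiM hk hk' hkk'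
  rw [← hval]
  gcongr

theorem mem_sSetMK_zero_of_fst_le (hiL : AntitoneOn iL (Set.Iic ν)) (hiM : iM μ = 0)
    {j k j' a : ℕ} (h : (j, k) ∈ S a 0) (hjj' : j ≤ j') (hj' : j' ≤ ν) (hl : j' + μ ≤ l) :
    (j', μ) ∈ S (j' + μ) 0 := by
  obtain ⟨hj, -, -, hval⟩ := mem_sSetMK_zero.mp h
  refine mem_sSetMK_zero.mpr
    ⟨hj', le_rfl, rfl, le_antisymm ?_ (by simpa using lamMK_le 0 hj' le_rfl hl)⟩
  have : (iL j' : ℝ) ≤ iL j := by exact_mod_cast hiL hj hj' hjj'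
  rw [← hval, hiM, Nat.cast_zero, mul_zero, add_zero]
  calc (m : ℝ) * iL j' ≤ m * iL j := by gcongr
    _ ≤ _ := le_add_of_nonneg_right (by positivity)

/-- Otherwise `(j₂, k₁)` is also a minimizer, which forces `i'_{k₁} = i'_{k₂}`, and then
`(j₁, k₂)` is a minimizer on a lower diagonal. -/
theorem lt_add_of_mem_sSetMK_zero (hp : 0 < p) (hiM : AntitoneOn iM (Set.Iic μ))
    {A j₁ k₁ j₂ k₂ : ℕ} (hmin : ∀ a < A, S a 0 = ∅) (h₁ : (j₁, k₁) ∈ S A 0)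
    (h₂ : (j₂, k₂) ∈ S A 0) (hj : j₁ < j₂) : l < j₂ + k₁ := by
  by_contra! hl
  obtain ⟨hj₁, hk₁, hA₁, hval₁⟩ := mem_sSetMK_zero.mp h₁
  obtain ⟨-, hk₂, hA₂, hval₂⟩ := mem_sSetMK_zero.mp h₂
  have h₂₁ := mem_sSetMK_zero_of_snd_le hiM h₂ (by omega) hk₁ hl
  have hiM_eq : (iM k₁ : ℝ) = iM k₂ := by
    have hpj : (p : ℝ) ^ j₂ ≠ 0 := by positivity
    simpa [hpj] using (mem_sSetMK_zero.mp h₂₁).2.2.2.trans hval₂.symm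
  have h₁₂ : (j₁, k₂) ∈ S (j₁ + k₂) 0 :=
    mem_sSetMK_zero.mpr ⟨hj₁, hk₂, rfl, hiM_eq ▸ hval₁⟩
  rwa [hmin _ (by omega)] at h₁₂

theorem sSetMK_zero_nontrivial_of_lt (hp : 0 < p) (hiL : AntitoneOn iL (Set.Iic ν))
    (hiM : AntitoneOn iM (Set.Iic μ)) (hiMμ : iM μ = 0) {A l₀ j₁ k₁ j₂ k₂ : ℕ}
    (hmin : ∀ a < A, S a 0 = ∅) (h₁ : (j₁, k₁) ∈ S A 0) (h₂ : (j₂, k₂) ∈ S A 0)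
    (hj : j₁ < j₂) (hAl₀ : A < l₀) (hl₀ : l₀ ≤ l) : (S l₀ 0).Nontrivial := by
  have hl := lt_add_of_mem_sSetMK_zero hp hiM hmin h₁ h₂ hj
  obtain ⟨-, hk₁, hA₁, -⟩ := mem_sSetMK_zero.mp h₁
  obtain ⟨hj₂, -, hA₂, -⟩ := mem_sSetMK_zero.mp h₂
  have h₂' : (j₂, l₀ - j₂) ∈ S l₀ 0 := by
    simpa [show j₂ + (l₀ - j₂) = l₀ by omega] using
      mem_sSetMK_zero_of_snd_le hiM h₂ (k' := l₀ - j₂) (by omega) (by omega) (by omega)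
  by_cases hl₀μ : l₀ ≤ j₁ + μ
  · have h₁' : (j₁, l₀ - j₁) ∈ S l₀ 0 := by
      simpa [show j₁ + (l₀ - j₁) = l₀ by omega] using
        mem_sSetMK_zero_of_snd_le hiM h₁ (k' := l₀ - j₁) (by omega) (by omega) (by omega)
    exact ⟨_, h₁', _, h₂', by simp [hj.ne]⟩
  · have h' : (l₀ - μ, μ) ∈ S l₀ 0 := by
      simpa [show l₀ - μ + μ = l₀ by omega] using
        mem_sSetMK_zero_of_fst_le hiL hiMμ h₁ (j' := l₀ - μ) (by omega) (by omega) (by omega)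
    exact ⟨_, h', _, h₂', by simp; omega⟩

theorem sSetMK_zero_nontrivial_of_le (hp : 0 < p) (hiL : AntitoneOn iL (Set.Iic ν))
    (hiM : AntitoneOn iM (Set.Iic μ)) (hiMμ : iM μ = 0) {A l₀ : ℕ}
    (hmin : ∀ a < A, S a 0 = ∅) (hA : (S A 0).Nontrivial) (hAl₀ : A ≤ l₀) (hl₀ : l₀ ≤ l) :
    (S l₀ 0).Nontrivial := by
  rcases hAl₀.eq_or_lt with rfl | hAl₀
  · exact hA
  obtain ⟨⟨j₁, k₁⟩, h₁, ⟨j₂, k₂⟩, h₂, hne⟩ := hA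
  have hA₁ := (mem_sSetMK_zero.mp h₁).2.2.1
  have hA₂ := (mem_sSetMK_zero.mp h₂).2.2.1
  have hj : j₁ ≠ j₂ := by rintro rfl; exact hne (by ext <;> simp; omega)
  rcases hj.lt_or_gt with hj | hj
  · exact sSetMK_zero_nontrivial_of_lt hp hiL hiM hiMμ hmin h₁ h₂ hj hAl₀ hl₀
  · exact sSetMK_zero_nontrivial_of_lt hp hiL hiM hiMμ hmin h₂ h₁ hj hAl₀ hl₀

theorem exists_lowest_level_existsUnique_mem_sSetMK_zero (hp : 0 < p)
    (hiL : AntitoneOn iL (Set.Iic ν)) (hiM : AntitoneOn iM (Set.Iic μ)) (hiMμ : iM μ = 0)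
    (hS : ∃ l₀ ≤ l, ∃! jk : ℕ × ℕ, jk ∈ S l₀ 0) :
    ∃ l₀' ≤ l, (∃! jk : ℕ × ℕ, jk ∈ S l₀' 0) ∧ ∀ a < l₀', S a 0 = ∅ := by
  classical
  obtain ⟨l₀, hl₀, hu⟩ := hS
  have hex : ∃ a, (S a 0).Nonempty := ⟨l₀, hu.exists⟩
  have hmin : ∀ a < Nat.find hex, S a 0 = ∅ := fun a ha =>
    Set.not_nonempty_iff_eq_empty.mp (Nat.find_min hex ha)
  refine ⟨Nat.find hex, (Nat.find_min' hex hu.exists).trans hl₀, ?_, hmin⟩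
  rcases (Nat.find_spec hex).exists_eq_singleton_or_nontrivial with ⟨x, hx⟩ | hA
  · exact ⟨x, by simp [hx], by simp [hx]⟩
  · obtain ⟨x, hx, y, hy, hxy⟩ := sSetMK_zero_nontrivial_of_le hp hiL hiM hiMμ hmin hA
      (Nat.find_min' hex hu.exists) hl₀
    exact absurd (hu.unique hx hy) hxy

end Minimizers

theorem stmt14_general
    (p : ℕ) [hp : Fact p.Prime]
    (OK : Type) [CommRing OK]
    (OL : Type) [CommRing OL]
    (OM : Type) [CommRing OM] [IsDomain OM]
    [Algebra OL OM]
    -- degrees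
    (n ν : ℕ)
    (m b μ : ℕ) (hmb : m = b * p ^ μ) (hpb : ¬ p ∣ b)
    -- uniformizers, total ramification
    (πL : OL)
    (πM : OM) (hπM : Irreducible πM)
    (htotM : Associated (algebraMap OL OM πL) (πM ^ m))
    -- F̂ : expansion of π_K in π_L, and the indices i_j of L/K
    (aF : ℕ → OK)
    (iL : ℕ → ℕ)
    (hiL : ∀ j ≤ ν, (iL j : ℕ∞) = insepIdx p n ν aF (piVal πL (p : OL)) j)
    -- Ĝ : expansion of π_L in π_M, and the indices i'_k of M/L
    (aG : ℕ → OL)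
    (hGeval : ∀ N : ℕ,
      algebraMap OL OM πL - ∑ h ∈ Finset.range N, algebraMap OL OM (aG h) * πM ^ (h + m)
        ∈ Ideal.span {πM ^ (m + N)})
    (iM : ℕ → ℕ)
    (hiM : ∀ k ≤ μ, (iM k : ℕ∞) = insepIdx p m μ aG (piVal πM (p : OM)) k)
    -- the claim
    (l : ℕ)
    (hS : ∃ l0 ≤ l, ∃! jk : ℕ × ℕ, jk ∈ sSetMK p m iL iM ν μ l l0 (0 : ℝ)) :
    ∃ l0' ≤ l, (∃! jk : ℕ × ℕ, jk ∈ sSetMK p m iL iM ν μ l l0' (0 : ℝ)) ∧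
      ∀ a' < l0', sSetMK p m iL iM ν μ l a' (0 : ℝ) = ∅ := by
  have haG : aG 0 ≠ 0 := by
    have h := ne_zero_of_sub_mul_pow_mem_span hπM htotM (by simpa using hGeval 1)
    exact fun h0 => h (by rw [h0, map_zero])
  have hiMμ : iM μ = 0 := by
    have h := hiM μ le_rfl
    rwa [insepIdx_self_eq_zero (by rw [hmb, padicValNat_mul_pow_of_not_dvd hpb]) haG,
      Nat.cast_eq_zero] at h
  exact exists_lowest_level_existsUnique_mem_sSetMK_zero hp.out.pos
    (antitoneOn_of_natCast_eq_insepIdx hiL) (antitoneOn_of_natCast_eq_insepIdx hiM) hiMμ hS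

/-- Lemma `c0`.  Let `0 ≤ l ≤ ν+μ` and suppose there exists
`l₀ ≤ l` such that `S_l^{l₀}(0)` has exactly one element.  Then `0 ∈ T_l(M/K)`:
there exists `l₀' ≤ l` with `|S_l^{l₀'}(0)| = 1` and `S_l^a(0) = ∅` for all `a < l₀'`. -/
theorem stmt14
    (p : ℕ) [hp : Fact p.Prime]
    (OK : Type) [CommRing OK] [IsDomain OK] [IsDiscreteValuationRing OK]
    [IsAdicComplete (IsLocalRing.maximalIdeal OK) OK]
    [CharP (IsLocalRing.ResidueField OK) p] [PerfectRing (IsLocalRing.ResidueField OK) p]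
    (OL : Type) [CommRing OL] [IsDomain OL] [IsDiscreteValuationRing OL]
    [IsAdicComplete (IsLocalRing.maximalIdeal OL) OL]
    [Algebra OK OL]
    (OM : Type) [CommRing OM] [IsDomain OM] [IsDiscreteValuationRing OM]
    [IsAdicComplete (IsLocalRing.maximalIdeal OM) OM]
    [Algebra OL OM] [Algebra OK OM] [IsScalarTower OK OL OM]
    (K L M : Type) [Field K] [Field L] [Field M]
    [Algebra OK K] [IsFractionRing OK K]
    [Algebra OL L] [IsFractionRing OL L]
    [Algebra OM M] [IsFractionRing OM M]
    [Algebra K L] [Algebra OK L] [IsScalarTower OK K L] [IsScalarTower OK OL L]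
    [Algebra L M] [Algebra OL M] [IsScalarTower OL L M] [IsScalarTower OL OM M]
    [Algebra K M] [IsScalarTower K L M]
    [Algebra.IsSeparable K L] [FiniteDimensional K L]
    [Algebra.IsSeparable L M] [FiniteDimensional L M]
    [Algebra.IsSeparable K M]
    -- degrees
    (n a ν : ℕ) (hna : n = a * p ^ ν) (hpa : ¬ p ∣ a) (hn1 : 1 < n)
    (hdeg : Module.finrank K L = n)
    (m b μ : ℕ) (hmb : m = b * p ^ μ) (hpb : ¬ p ∣ b) (hm1 : 1 < m)
    (hdegM : Module.finrank L M = m)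
    -- uniformizers, total ramification
    (πK : OK) (hπK : Irreducible πK) (πL : OL) (hπL : Irreducible πL)
    (πM : OM) (hπM : Irreducible πM)
    (htot : Associated (algebraMap OK OL πK) (πL ^ n))
    (hres : ∀ x : OL, ∃ y : OK, x - algebraMap OK OL y ∈ IsLocalRing.maximalIdeal OL)
    (htotM : Associated (algebraMap OL OM πL) (πM ^ m))
    (hresM : ∀ x : OM, ∃ y : OL, x - algebraMap OL OM y ∈ IsLocalRing.maximalIdeal OM)
    -- Teichmüller representatives of O_K and O_L
    (TR : Set OK) (hTR0 : (0 : OK) ∈ TR)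
    (hTRbij : Set.BijOn (IsLocalRing.residue OK) TR Set.univ)
    (hTRmul : ∀ r ∈ TR, ∀ s ∈ TR, r * s ∈ TR)
    (TRL : Set OL) (hTRL0 : (0 : OL) ∈ TRL)
    (hTRLbij : Set.BijOn (IsLocalRing.residue OL) TRL Set.univ)
    (hTRLmul : ∀ r ∈ TRL, ∀ s ∈ TRL, r * s ∈ TRL)
    -- F̂ : expansion of π_K in π_L, and the indices i_j of L/K
    (aF : ℕ → OK) (haF : ∀ h, aF h ∈ TR)
    (hFeval : ∀ N : ℕ,
      algebraMap OK OL πK - ∑ h ∈ Finset.range N, algebraMap OK OL (aF h) * πL ^ (h + n)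
        ∈ Ideal.span {πL ^ (n + N)})
    (iL : ℕ → ℕ)
    (hiL : ∀ j ≤ ν, (iL j : ℕ∞) = insepIdx p n ν aF (piVal πL (p : OL)) j)
    -- Ĝ : expansion of π_L in π_M, and the indices i'_k of M/L
    (aG : ℕ → OL) (haG : ∀ h, aG h ∈ TRL)
    (hGeval : ∀ N : ℕ,
      algebraMap OL OM πL - ∑ h ∈ Finset.range N, algebraMap OL OM (aG h) * πM ^ (h + m)
        ∈ Ideal.span {πM ^ (m + N)})
    (iM : ℕ → ℕ)
    (hiM : ∀ k ≤ μ, (iM k : ℕ∞) = insepIdx p m μ aG (piVal πM (p : OM)) k)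
    -- Ĥ : expansion of π_K in π_M, and the indices i''_l of M/K
    (aH : ℕ → OK) (haH : ∀ h, aH h ∈ TR)
    (hHeval : ∀ N : ℕ,
      algebraMap OK OM πK
          - ∑ h ∈ Finset.range N, algebraMap OK OM (aH h) * πM ^ (h + n * m)
        ∈ Ideal.span {πM ^ (n * m + N)})
    (iMK : ℕ → ℕ)
    (hiMK : ∀ l ≤ ν + μ, (iMK l : ℕ∞) = insepIdx p (n * m) (ν + μ) aH (piVal πM (p : OM)) l)
    -- the claim
    (l : ℕ) (hl : l ≤ ν + μ)
    (hS : ∃ l0 ≤ l, ∃! jk : ℕ × ℕ, jk ∈ sSetMK p m iL iM ν μ l l0 (0 : ℝ)) :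
    ∃ l0' ≤ l, (∃! jk : ℕ × ℕ, jk ∈ sSetMK p m iL iM ν μ l l0' (0 : ℝ)) ∧
      ∀ a' < l0', sSetMK p m iL iM ν μ l a' (0 : ℝ) = ∅ :=
  stmt14_general p (hp := hp) OK OL OM n ν m b μ hmb hpb πL πM hπM htotM aF iL hiL aG hGeval iM hiM
    l hS
end
end

section
/- Let c ∈ ℕ₀ ∩ T_l(M/K), let l₀ be the integer specified in the definition of T_l(M/K) for t = c, and let (j,k) be the unique element of Ω_{l₀} with λ^l_{M/K}(c) = φ̃^{j,m}_{L/K}(φ̃^k_{M/L}(c)). Suppose r_0,…,r_ν ∈ R, s_0,…,s_μ ∈ R, δ_F ∈ (π_L,ε)·I_F and δ_G ∈ (π_M,ε)·I'_G satisfy F̂(π_L(1+ε)) = π_K·(1 + Σ_{j'=0}^{ν} r_{j'} π_L^{i_{j'}} ε^{p^{j'}} + δ_F) and Ĝ(π_M(1+π_M^c ε)) = π_L·(1 + Σ_{k'=0}^{μ} s_{k'} π_M^{φ̃^{k'}_{M/L}(c)} ε^{p^{k'}} + δ_G). Then r_j ≠ 0 and s_k ≠ 0. -/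
noncomputable section

/-!
Suppose `r_j = 0`. Then the `ε ^ p ^ j`-coefficient of `F̂(π_L(1 + ε))` is `π_K` times that of
`δ_F`, and since `c ∈ T_l(M/K)` forces `i_j < i_{j'}` for `j' < j`, it is divisible by
`π_L ^ (n + i_j + 1)`. Expanding `F̂`, the same coefficient is `∑_t a_t π_L^(t+n) C(t+n, p^j)`.
The term of index `t` has valuation `n + t + v_p(C(t+n, p^j))·v_L(p)`, and
`v_p(C(A, p^j)) = v_p(A) - j` when `p^j ∣ A`; minimising over `t` therefore reproduces the formula
`i_j = min (ĩ_{j₁} + (j₁ - j)·v_L(p))`, so the minimum `n + i_j` is attained, and it is attained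
only once because `p^ν ∣ v_L(p)`. Hence the coefficient has valuation exactly `n + i_j`, a
contradiction. For `s_k` the same argument runs for `Ĝ(π_M(1 + π_M^c ε))`, where the substitution
`ε ↦ π_M^c ε` shifts the exponent `i'_k` to `φ̃^k_{M/L}(c) = i'_k + p^k c`.
-/

section PadicChoose

variable {p : ℕ} [hp : Fact p.Prime]

lemma padicValNat_mul_pow_of_not_dvd_s15 {a ν : ℕ} (ha : ¬ p ∣ a) :
    padicValNat p (a * p ^ ν) = ν := by
  rw [padicValNat.mul (by rintro rfl; exact ha (dvd_zero p)) (pow_ne_zero ν hp.out.ne_zero),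
    padicValNat.eq_zero_of_not_dvd ha, padicValNat.prime_pow, zero_add]

lemma mul_sub_one_mod_div {B : ℕ} (hB : 0 < B) :
    (p * B - 1) % p = p - 1 ∧ (p * B - 1) / p = B - 1 := by
  have hp0 := hp.out.pos
  have h : p * B - 1 = p - 1 + p * (B - 1) := by
    obtain ⟨B, rfl⟩ : ∃ B', B = B' + 1 := ⟨B - 1, by omega⟩
    rw [Nat.add_sub_cancel, Nat.mul_add, Nat.mul_one]
    omega
  rw [h, Nat.add_mul_mod_self_left, Nat.add_mul_div_left _ _ hp0,
    Nat.mod_eq_of_lt (by omega), Nat.div_eq_of_lt (by omega)]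
  simp

/-- Lucas: the base-`p` digits of `p ^ j - 1` are all `p - 1`, and so are the last `j` digits
of `A - 1`. -/
lemma not_dvd_choose_sub_one_pow_sub_one {j A : ℕ} (hA : 0 < A) (hdvd : p ^ j ∣ A) :
    ¬ p ∣ (A - 1).choose (p ^ j - 1) := by
  induction j generalizing A with
  | zero => simpa using hp.out.one_lt.ne'
  | succ j ih =>
    obtain ⟨B, rfl⟩ : p ∣ A := (dvd_pow_self p j.succ_ne_zero).trans hdvd
    have hB : 0 < B := Nat.pos_of_mul_pos_left hA
    rw [pow_succ', mul_dvd_mul_iff_left hp.out.ne_zero] at hdvd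
    have hpj : 0 < p ^ j := pow_pos hp.out.pos j
    have lucas := Choose.choose_modEq_choose_mod_mul_choose_div_nat
      (p := p) (n := p * B - 1) (k := p ^ (j + 1) - 1)
    rw [pow_succ', (mul_sub_one_mod_div hB).1, (mul_sub_one_mod_div hB).2,
      (mul_sub_one_mod_div hpj).1, (mul_sub_one_mod_div hpj).2, Nat.choose_self, one_mul] at lucas
    rw [pow_succ', lucas.dvd_iff dvd_rfl]
    exact ih hB hdvd

lemma mul_choose_sub_one_pow_sub_one {j A : ℕ} (hA : p ^ j ≤ A) :
    A * (A - 1).choose (p ^ j - 1) = A.choose (p ^ j) * p ^ j := by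
  have hpj : 0 < p ^ j := pow_pos hp.out.pos j
  have h := Nat.add_one_mul_choose_eq (A - 1) (p ^ j - 1)
  rwa [Nat.sub_add_cancel (by omega), Nat.sub_add_cancel hpj] at h

lemma padicValNat_add_padicValNat_choose_sub_one {j A : ℕ} (hA : p ^ j ≤ A) :
    padicValNat p A + padicValNat p ((A - 1).choose (p ^ j - 1)) =
      j + padicValNat p (A.choose (p ^ j)) := by
  have hpj : 0 < p ^ j := pow_pos hp.out.pos j
  have h := congrArg (padicValNat p) (mul_choose_sub_one_pow_sub_one hA)
  rw [padicValNat.mul (by omega) (Nat.choose_pos (by omega)).ne',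
    padicValNat.mul (Nat.choose_pos hA).ne' hpj.ne', padicValNat.prime_pow] at h
  omega

lemma padicValNat_le_add_padicValNat_choose {j A : ℕ} (hA : p ^ j ≤ A) :
    padicValNat p A ≤ j + padicValNat p (A.choose (p ^ j)) := by
  have := padicValNat_add_padicValNat_choose_sub_one hA
  omega

lemma padicValNat_choose_of_pow_dvd {j A : ℕ} (hA : 0 < A) (hdvd : p ^ j ∣ A) :
    padicValNat p A = j + padicValNat p (A.choose (p ^ j)) := by
  have := padicValNat_add_padicValNat_choose_sub_one (Nat.le_of_dvd hA hdvd)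
  rwa [padicValNat.eq_zero_of_not_dvd (not_dvd_choose_sub_one_pow_sub_one hA hdvd),
    add_zero] at this

lemma eq_of_add_mul_eq_of_padicValNat {x x' v w w' J ν : ℕ}
    (hx0 : x ≠ 0) (hx'0 : x' ≠ 0) (hx : padicValNat p x = J + w)
    (hx' : padicValNat p x' = J + w') (hw : J + w ≤ ν) (hw' : J + w' ≤ ν) (hv : p ^ ν ∣ v)
    (h : x + w * v = x' + w' * v) : w = w' := by
  wlog hlt : w < w' generalizing x x' w w'
  · rcases (not_lt.mp hlt).lt_or_eq with h' | h'
    · exact (this hx'0 hx0 hx' hx hw' hw h.symm h').symm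
    · exact h'.symm
  have hxeq : x = x' + (w' - w) * v := by
    have : w * v ≤ w' * v := Nat.mul_le_mul_right v hlt.le
    rw [Nat.sub_mul]; omega
  have hdvd : p ^ (J + w + 1) ∣ x := by
    rw [hxeq]
    exact dvd_add ((padicValNat_dvd_iff_le hx'0).mpr (by omega))
      (((pow_dvd_pow p (by omega)).trans hv).mul_left _)
  have := (padicValNat_dvd_iff_le hx0).mp hdvd
  omega

end PadicChoose

lemma not_dvd_sum_of_forall_ne {ι R : Type*} [DecidableEq ι] [CommRing R] {s : Finset ι}
    {f : ι → R} {d : R} {i : ι} (hi : i ∈ s) (hfi : ¬ d ∣ f i) (hf : ∀ j ∈ s, j ≠ i → d ∣ f j) :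
    ¬ d ∣ ∑ j ∈ s, f j := by
  rwa [← Finset.add_sum_erase s f hi, dvd_add_left (Finset.dvd_sum fun j hj =>
    hf j (Finset.mem_of_mem_erase hj) (Finset.ne_of_mem_erase hj))]

section Divisibility

variable {O : Type*} [CommRing O] {π : O}

lemma exists_natCast_eq_unit_mul_pow {p : ℕ} [hp : Fact p.Prime]
    (hcop : ∀ C : ℕ, ¬ p ∣ C → IsUnit (C : O)) {u : O} (hu : IsUnit u) {v : ℕ}
    (hpu : (p : O) = u * π ^ v) {C : ℕ} (hC : C ≠ 0) :
    ∃ u', IsUnit u' ∧ (C : O) = u' * π ^ (padicValNat p C * v) := by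
  set e := padicValNat p C
  have hdvd : p ^ e ∣ C := pow_padicValNat_dvd
  have hC' : ¬ p ∣ C / p ^ e := by
    rw [dvd_iff_padicValNat_ne_zero (Nat.div_pos (Nat.le_of_dvd (by omega) hdvd)
      (pow_pos hp.out.pos e)).ne', padicValNat.div_pow hdvd, Nat.sub_self]
    exact fun h => h rfl
  refine ⟨u ^ e * (C / p ^ e : ℕ), (hu.pow e).mul (hcop _ hC'), ?_⟩
  conv_lhs => rw [← Nat.mul_div_cancel' hdvd]
  rw [Nat.cast_mul, Nat.cast_pow, hpu, mul_pow, ← pow_mul, mul_comm v e]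
  ring

variable [IsDomain O]

lemma not_pow_succ_dvd_unit_mul_pow (hπ : Irreducible π) {u : O} (hu : IsUnit u) (k : ℕ) :
    ¬ π ^ (k + 1) ∣ u * π ^ k := by
  rw [hu.dvd_mul_left, pow_dvd_pow_iff hπ.ne_zero hπ.not_isUnit]
  omega

lemma ne_zero_of_sub_mul_pow_mem (hπ : Irreducible π) {κ x : O} {n : ℕ}
    (hκ : Associated κ (π ^ n)) (h : κ - x * π ^ n ∈ Ideal.span {π ^ (n + 1)}) : x ≠ 0 := by
  rintro rfl
  obtain ⟨w, hw⟩ := hκ.symm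
  rw [zero_mul, sub_zero, Ideal.mem_span_singleton, ← hw, mul_comm] at h
  exact not_pow_succ_dvd_unit_mul_pow hπ w.isUnit n h

end Divisibility

section Ramification

open IsLocalRing

lemma isUnit_natCast_of_not_dvd {A : Type*} [CommRing A] [IsLocalRing A] {p : ℕ}
    [CharP (ResidueField A) p] {C : ℕ} (hC : ¬ p ∣ C) : IsUnit (C : A) := by
  rw [← notMem_maximalIdeal, ← Ideal.Quotient.eq_zero_iff_mem]
  exact fun h => hC ((CharP.cast_eq_zero_iff (ResidueField A) p C).mp (by
    rwa [← map_natCast (residue A)]))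

lemma isUnit_of_injOn_residue {A : Type*} [CommRing A] [IsLocalRing A] {T : Set A}
    (h0 : (0 : A) ∈ T) (hinj : Set.InjOn (residue A) T) {x : A} (hx : x ∈ T) (hx0 : x ≠ 0) :
    IsUnit x := by
  rw [← notMem_maximalIdeal, ← Ideal.Quotient.eq_zero_iff_mem]
  exact fun h => hx0 (hinj hx h0 (by rw [map_zero]; exact h))

/-- `d` divides the absolute ramification index `v_π(p)`, read as `∞` when `(p : O) = 0`. -/
def AbsRamificationDvd {O : Type*} [CommRing O] (p : ℕ) (π : O) (d : ℕ) : Prop :=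
  (p : O) = 0 ∨ ∃ u v, IsUnit u ∧ (p : O) = u * π ^ v ∧ v ≠ 0 ∧ d ∣ v

namespace AbsRamificationDvd

variable {A B : Type*} [CommRing A] [CommRing B] {p : ℕ} {πA : A} {d : ℕ}

lemma of_charP_residueField [IsDomain A] [IsDiscreteValuationRing A] (hπ : Irreducible πA)
    [Fact p.Prime] [CharP (ResidueField A) p] : AbsRamificationDvd p πA 1 := by
  refine or_iff_not_imp_left.mpr fun hp0 => ?_
  obtain ⟨v, u, hu⟩ := IsDiscreteValuationRing.eq_unit_mul_pow_irreducible hp0 hπ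
  refine ⟨u, v, u.isUnit, hu, ?_, one_dvd v⟩
  rintro rfl
  have hunit := u.isUnit.map (residue A)
  rw [← mul_one (u : A), ← pow_zero πA, ← hu, map_natCast, CharP.cast_eq_zero] at hunit
  exact not_isUnit_zero hunit

lemma mono (h : AbsRamificationDvd p πA d) {d' : ℕ} (hd : d' ∣ d) :
    AbsRamificationDvd p πA d' :=
  h.imp_right fun ⟨u, v, hu, hpu, hv, hdv⟩ => ⟨u, v, hu, hpu, hv, hd.trans hdv⟩

lemma map (h : AbsRamificationDvd p πA d) (f : A →+* B) {πB : B} {e : ℕ} (he : e ≠ 0)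
    (hf : Associated (f πA) (πB ^ e)) : AbsRamificationDvd p πB (d * e) := by
  rcases h with hp0 | ⟨u, v, hu, hpu, hv, hdv⟩
  · exact Or.inl (by rw [← map_natCast f, hp0, map_zero])
  obtain ⟨w, hw⟩ := hf.symm
  refine Or.inr ⟨f u * (w : B) ^ v, e * v, (hu.map f).mul (w.isUnit.pow v), ?_,
    mul_ne_zero he hv, mul_comm d e ▸ mul_dvd_mul_left e hdv⟩
  rw [← map_natCast f, hpu, map_mul, map_pow, ← hw, pow_mul]
  ring

end AbsRamificationDvd

end Ramification

section InseparabilityIndices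

variable {p n ν : ℕ} {A : Type*} [CommRing A] {a : ℕ → A} {V : ℕ∞}

lemma ENat.exists_mem_eq_biInf {ι : Type*} {S : Set ι} (hS : S.Nonempty) (f : ι → ℕ∞) :
    ∃ i ∈ S, f i = ⨅ x ∈ S, f x := by
  have := hS.to_subtype
  obtain ⟨⟨i, hi⟩, h⟩ := ENat.exists_eq_iInf fun x : S => f x
  exact ⟨i, hi, h.trans (iInf_subtype' (p := (· ∈ S)) (f := fun x _ => f x)).symm⟩

lemma itilde_le {j t : ℕ} (hvt : padicValNat p (t + n) ≤ j) (hat : a t ≠ 0) :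
    itilde p n a j ≤ t :=
  iInf₂_le t ⟨hvt, hat⟩

lemma mem_of_itilde_eq {j t : ℕ} (h : itilde p n a j = t) :
    padicValNat p (t + n) ≤ j ∧ a t ≠ 0 := by
  obtain hS | hS := Set.eq_empty_or_nonempty {h : ℕ | padicValNat p (h + n) ≤ j ∧ a h ≠ 0}
  · rw [itilde, hS] at h
    simp at h
  obtain ⟨t', ht', heq⟩ := ENat.exists_mem_eq_biInf hS (fun h : ℕ => (h : ℕ∞))
  rw [← itilde, h, Nat.cast_inj] at heq
  exact heq ▸ ht'

lemma insepIdx_le {j j₁ : ℕ} (hj : j ≤ j₁) (hj₁ : j₁ ≤ ν) :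
    insepIdx p n ν a V j ≤ itilde p n a j₁ + ((j₁ - j : ℕ) : ℕ∞) * V :=
  iInf₂_le j₁ ⟨hj, hj₁⟩

lemma exists_insepIdx_eq {j : ℕ} (hj : j ≤ ν) :
    ∃ j₁, j ≤ j₁ ∧ j₁ ≤ ν ∧ insepIdx p n ν a V j = itilde p n a j₁ + ((j₁ - j : ℕ) : ℕ∞) * V := by
  obtain ⟨j₁, hj₁, h⟩ := ENat.exists_mem_eq_biInf (S := Set.Icc j ν) ⟨j, le_rfl, hj⟩
    fun j₁ => itilde p n a j₁ + ((j₁ - j : ℕ) : ℕ∞) * V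
  exact ⟨j₁, hj₁.1, hj₁.2, h.symm⟩

lemma insepIdx_top {j : ℕ} (hj : j ≤ ν) : insepIdx p n ν a ⊤ j = itilde p n a j := by
  refine le_antisymm (by simpa using insepIdx_le (a := a) (V := ⊤) le_rfl hj) ?_
  refine le_iInf₂ fun j₁ ⟨hj₁, _⟩ => ?_
  rcases hj₁.eq_or_lt with rfl | hlt
  · simp
  · rw [ENat.mul_top (Nat.cast_ne_zero.mpr (Nat.sub_ne_zero_of_lt hlt)), add_top]
    exact le_top

end InseparabilityIndices

section PiVal

variable {O : Type*} [CommRing O] {π : O}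

lemma piVal_zero (π : O) : piVal π 0 = ⊤ := by
  simp [piVal, ENat.iSup_natCast]

variable [IsDomain O]

lemma piVal_unit_mul_pow (hπ : Irreducible π) {u : O} (hu : IsUnit u) (v : ℕ) :
    piVal π (u * π ^ v) = v := by
  have hset : {k : ℕ | u * π ^ v ∈ Ideal.span {π ^ k}} = Set.Iic v := by
    ext k
    rw [Set.mem_ofPred_eq, Ideal.mem_span_singleton, hu.dvd_mul_left,
      pow_dvd_pow_iff hπ.ne_zero hπ.not_isUnit, Set.mem_Iic]
  rw [piVal, hset]
  exact le_antisymm (iSup₂_le fun k hk => Nat.cast_le.mpr hk)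
    (le_iSup₂_of_le v (Set.mem_Iic.mpr le_rfl) le_rfl)

end PiVal

section Jump

variable {p n ν : ℕ} {A : Type*} [CommRing A] {a : ℕ → A} {V : ℕ∞}
  {ii : ℕ → ℕ} {J : ℕ}

lemma le_padicValNat_of_le_of_jump (hii : ∀ j ≤ ν, (ii j : ℕ∞) = insepIdx p n ν a V j)
    (hJ : J ≤ ν) (hjump : ∀ e < J, ii J < ii e) {t : ℕ} (ht : t ≤ ii J) (hat : a t ≠ 0) :
    J ≤ padicValNat p (t + n) := by
  by_contra! h
  have hle : (ii (padicValNat p (t + n)) : ℕ∞) ≤ t := by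
    rw [hii _ (by omega)]
    exact (insepIdx_le le_rfl (by omega)).trans (by simpa using itilde_le le_rfl hat)
  have := hjump _ h
  have : ii (padicValNat p (t + n)) ≤ t := by exact_mod_cast hle
  omega

variable [hp : Fact p.Prime]

lemma pow_le_add_of_padicValNat_eq (hn : 0 < n) (hvpn : padicValNat p n = ν) (hJ : J ≤ ν)
    (t : ℕ) : p ^ J ≤ t + n :=
  calc p ^ J ≤ p ^ ν := Nat.pow_le_pow_right hp.out.pos hJ
    _ ≤ n := Nat.le_of_dvd hn (hvpn ▸ pow_padicValNat_dvd)
    _ ≤ t + n := Nat.le_add_left n t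

lemma padicValNat_eq_add_padicValNat_choose (hii : ∀ j ≤ ν, (ii j : ℕ∞) = insepIdx p n ν a V j)
    (hn : 0 < n) (hJ : J ≤ ν) (hjump : ∀ e < J, ii J < ii e) {t : ℕ} (ht : t ≤ ii J)
    (hat : a t ≠ 0) :
    padicValNat p (t + n) = J + padicValNat p ((t + n).choose (p ^ J)) :=
  padicValNat_choose_of_pow_dvd (by omega) ((padicValNat_dvd_iff_le (by omega)).mpr
    (le_padicValNat_of_le_of_jump hii hJ hjump ht hat))

end Jump

section MixedCharacteristic

variable {p n ν : ℕ} {A : Type*} [CommRing A] {a : ℕ → A} {v : ℕ}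
  {ii : ℕ → ℕ} {J : ℕ}

lemma le_add_mul_of_padicValNat_le (hii : ∀ j ≤ ν, (ii j : ℕ∞) = insepIdx p n ν a v j)
    {j₁ t : ℕ} (hJj₁ : J ≤ j₁) (hj₁ : j₁ ≤ ν) (hvt : padicValNat p (t + n) ≤ j₁)
    (hat : a t ≠ 0) : ii J ≤ t + (j₁ - J) * v := by
  have h : (ii J : ℕ∞) ≤ t + ((j₁ - J : ℕ) : ℕ∞) * v := by
    rw [hii J (hJj₁.trans hj₁)]
    exact (insepIdx_le hJj₁ hj₁).trans (add_le_add_left (itilde_le hvt hat) _)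
  exact_mod_cast h

lemma le_sub_mul_of_insepIdx_eq (hii : ∀ j ≤ ν, (ii j : ℕ∞) = insepIdx p n ν a v j)
    (hvpn : padicValNat p n = ν) (ha0 : a 0 ≠ 0) (hJ : J ≤ ν) : ii J ≤ (ν - J) * v := by
  simpa using le_add_mul_of_padicValNat_le hii hJ le_rfl (by simp [hvpn]) ha0

lemma add_padicValNat_choose_le (hii : ∀ j ≤ ν, (ii j : ℕ∞) = insepIdx p n ν a v j)
    (hvpn : padicValNat p n = ν) (ha0 : a 0 ≠ 0) (hJ : J ≤ ν) (hv : v ≠ 0) {t : ℕ}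
    (ht : t + padicValNat p ((t + n).choose (p ^ J)) * v ≤ ii J) :
    J + padicValNat p ((t + n).choose (p ^ J)) ≤ ν := by
  set w := padicValNat p ((t + n).choose (p ^ J))
  by_contra! h
  have h1 := le_sub_mul_of_insepIdx_eq hii hvpn ha0 hJ
  have h2 : (ν - J + 1) * v ≤ w * v := Nat.mul_le_mul_right v (by omega)
  rw [Nat.succ_mul] at h2
  omega

variable [hp : Fact p.Prime]

lemma le_add_mul_padicValNat_choose (hii : ∀ j ≤ ν, (ii j : ℕ∞) = insepIdx p n ν a v j)
    (hn : 0 < n) (hvpn : padicValNat p n = ν) (ha0 : a 0 ≠ 0) (hJ : J ≤ ν) {t : ℕ}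
    (hat : a t ≠ 0) : ii J ≤ t + padicValNat p ((t + n).choose (p ^ J)) * v := by
  set w := padicValNat p ((t + n).choose (p ^ J))
  by_cases hw : J + w ≤ ν
  · simpa using le_add_mul_of_padicValNat_le hii (Nat.le_add_right J w) hw
      (padicValNat_le_add_padicValNat_choose (pow_le_add_of_padicValNat_eq hn hvpn hJ t)) hat
  · calc ii J ≤ (ν - J) * v := le_sub_mul_of_insepIdx_eq hii hvpn ha0 hJ
      _ ≤ w * v := Nat.mul_le_mul_right v (by omega)
      _ ≤ t + w * v := Nat.le_add_left _ _

lemma exists_add_mul_padicValNat_choose_eq (hii : ∀ j ≤ ν, (ii j : ℕ∞) = insepIdx p n ν a v j)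
    (hn : 0 < n) (hvpn : padicValNat p n = ν) (ha0 : a 0 ≠ 0) (hJ : J ≤ ν)
    (hjump : ∀ e < J, ii J < ii e) :
    ∃ t, a t ≠ 0 ∧ t + padicValNat p ((t + n).choose (p ^ J)) * v = ii J := by
  obtain ⟨j₁, hJj₁, hj₁, h⟩ := exists_insepIdx_eq (p := p) (n := n) (a := a) (V := v) hJ
  rw [← hii J hJ] at h
  have hne : itilde p n a j₁ ≠ ⊤ := fun htop => by simp [htop] at h
  obtain ⟨t, ht⟩ := ENat.ne_top_iff_exists.mp hne
  rw [← ht] at h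
  have hIJ : ii J = t + (j₁ - J) * v := by exact_mod_cast h
  obtain ⟨hvt, hat⟩ := mem_of_itilde_eq ht.symm
  have hval := padicValNat_eq_add_padicValNat_choose hii hn hJ hjump (by omega) hat
  refine ⟨t, hat, le_antisymm ?_ (le_add_mul_padicValNat_choose hii hn hvpn ha0 hJ hat)⟩
  rw [hIJ]
  gcongr
  omega

end MixedCharacteristic

section LeadingTerm

variable {p n ν : ℕ} [hp : Fact p.Prime] {A : Type*} [CommRing A] {a : ℕ → A}
  {ii : ℕ → ℕ} {J : ℕ} {O : Type*} [CommRing O] [IsDomain O] (f : A →+* O) {π : O}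

lemma eq_of_add_mul_padicValNat_choose_eq {v : ℕ}
    (hii : ∀ j ≤ ν, (ii j : ℕ∞) = insepIdx p n ν a v j) (hn : 0 < n)
    (hvpn : padicValNat p n = ν) (ha0 : a 0 ≠ 0) (hJ : J ≤ ν) (hjump : ∀ e < J, ii J < ii e)
    (hv : v ≠ 0) (hpv : p ^ ν ∣ v) {t t' : ℕ} (hat : a t ≠ 0) (hat' : a t' ≠ 0)
    (ht : t + padicValNat p ((t + n).choose (p ^ J)) * v = ii J)
    (ht' : t' + padicValNat p ((t' + n).choose (p ^ J)) * v = ii J) : t = t' := by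
  have hw := eq_of_add_mul_eq_of_padicValNat (x := t + n) (x' := t' + n) (by omega) (by omega)
    (padicValNat_eq_add_padicValNat_choose hii hn hJ hjump (by omega) hat)
    (padicValNat_eq_add_padicValNat_choose hii hn hJ hjump (by omega) hat')
    (add_padicValNat_choose_le hii hvpn ha0 hJ hv ht.le)
    (add_padicValNat_choose_le hii hvpn ha0 hJ hv ht'.le) hpv (by omega)
  rw [hw] at ht
  omega

lemma not_pow_succ_dvd_sum_choose_of_natCast_eq_zero (hπ : Irreducible π)
    (hcop : ∀ C : ℕ, ¬ p ∣ C → IsUnit (C : O)) (hp0 : (p : O) = 0)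
    (ha : ∀ t, a t ≠ 0 → IsUnit (a t)) (hii : ∀ j ≤ ν, (ii j : ℕ∞) = insepIdx p n ν a ⊤ j)
    (hn : 0 < n) (hvpn : padicValNat p n = ν) (hJ : J ≤ ν) (hjump : ∀ e < J, ii J < ii e)
    {N : ℕ} (hN : ii J < N) :
    ¬ π ^ (n + ii J + 1) ∣
      ∑ t ∈ Finset.range N, f (a t) * π ^ (t + n) * ((t + n).choose (p ^ J) : O) := by
  have hI : itilde p n a J = ii J := by rw [hii J hJ, insepIdx_top hJ]
  obtain ⟨hvI, haI⟩ := mem_of_itilde_eq hI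
  refine not_dvd_sum_of_forall_ne (Finset.mem_range.mpr hN) ?_ fun t _ ht => ?_
  · have hval := padicValNat_eq_add_padicValNat_choose hii hn hJ hjump le_rfl haI
    have hC : ¬ p ∣ (ii J + n).choose (p ^ J) := by
      rw [dvd_iff_padicValNat_ne_zero
        (Nat.choose_pos (pow_le_add_of_padicValNat_eq hn hvpn hJ _)).ne']
      omega
    rw [mul_right_comm, add_comm n]
    exact not_pow_succ_dvd_unit_mul_pow hπ (((ha _ haI).map f).mul (hcop _ hC)) _
  rcases lt_or_gt_of_ne ht with hlt | hgt
  · by_cases hat : a t = 0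
    · simp [hat]
    by_cases hC : p ∣ (t + n).choose (p ^ J)
    · obtain ⟨k, hk⟩ := hC
      simp [hk, hp0]
    have hvt := padicValNat_le_add_padicValNat_choose
      (pow_le_add_of_padicValNat_eq (p := p) hn hvpn hJ t)
    rw [padicValNat.eq_zero_of_not_dvd hC, add_zero] at hvt
    have := hI ▸ itilde_le hvt hat
    exact absurd (Nat.cast_le.mp this) (not_le.mpr hlt)
  · exact ((pow_dvd_pow π (by omega)).mul_left _).mul_right _

lemma not_pow_succ_dvd_sum_choose_of_natCast_eq_unit_mul_pow (hπ : Irreducible π)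
    (hcop : ∀ C : ℕ, ¬ p ∣ C → IsUnit (C : O)) {u : O} {v : ℕ} (hu : IsUnit u)
    (hpu : (p : O) = u * π ^ v) (hv : v ≠ 0) (hpv : p ^ ν ∣ v)
    (ha : ∀ t, a t ≠ 0 → IsUnit (a t)) (ha0 : a 0 ≠ 0)
    (hii : ∀ j ≤ ν, (ii j : ℕ∞) = insepIdx p n ν a v j)
    (hn : 0 < n) (hvpn : padicValNat p n = ν) (hJ : J ≤ ν) (hjump : ∀ e < J, ii J < ii e)
    {N : ℕ} (hN : ii J < N) :
    ¬ π ^ (n + ii J + 1) ∣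
      ∑ t ∈ Finset.range N, f (a t) * π ^ (t + n) * ((t + n).choose (p ^ J) : O) := by
  have hterm : ∀ t, a t ≠ 0 → ∃ u', IsUnit u' ∧ f (a t) * π ^ (t + n) *
      ((t + n).choose (p ^ J) : O) =
        u' * π ^ (n + (t + padicValNat p ((t + n).choose (p ^ J)) * v)) := by
    intro t hat
    obtain ⟨u', hu', hC⟩ := exists_natCast_eq_unit_mul_pow hcop hu hpu
      (Nat.choose_pos (pow_le_add_of_padicValNat_eq hn hvpn hJ t)).ne'
    exact ⟨f (a t) * u', ((ha t hat).map f).mul hu', by rw [hC]; ring⟩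
  obtain ⟨t₀, hat₀, ht₀⟩ := exists_add_mul_padicValNat_choose_eq hii hn hvpn ha0 hJ hjump
  refine not_dvd_sum_of_forall_ne (i := t₀) (Finset.mem_range.mpr (by omega)) ?_
    fun t _ ht => ?_
  · obtain ⟨u', hu', h⟩ := hterm t₀ hat₀
    rw [h, ht₀]
    exact not_pow_succ_dvd_unit_mul_pow hπ hu' _
  by_cases hat : a t = 0
  · simp [hat]
  obtain ⟨u', hu', h⟩ := hterm t hat
  have hlt := lt_of_le_of_ne (le_add_mul_padicValNat_choose hii hn hvpn ha0 hJ hat)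
    fun h => ht (eq_of_add_mul_padicValNat_choose_eq hii hn hvpn ha0 hJ hjump hv hpv hat hat₀
      h.symm ht₀)
  rw [h]
  exact (pow_dvd_pow π (by omega)).mul_left u'

/-- The sum is the `ε ^ p ^ J`-coefficient of `F̂(π(1 + ε))` modulo `π ^ (n + N)`. -/
theorem not_pow_succ_dvd_sum_choose (hπ : Irreducible π)
    (hcop : ∀ C : ℕ, ¬ p ∣ C → IsUnit (C : O)) (hram : AbsRamificationDvd p π (p ^ ν))
    (ha : ∀ t, a t ≠ 0 → IsUnit (a t)) (ha0 : a 0 ≠ 0)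
    (hii : ∀ j ≤ ν, (ii j : ℕ∞) = insepIdx p n ν a (piVal π (p : O)) j)
    (hn : 0 < n) (hvpn : padicValNat p n = ν) (hJ : J ≤ ν) (hjump : ∀ e < J, ii J < ii e)
    {N : ℕ} (hN : ii J < N) :
    ¬ π ^ (n + ii J + 1) ∣
      ∑ t ∈ Finset.range N, f (a t) * π ^ (t + n) * ((t + n).choose (p ^ J) : O) := by
  rcases hram with hp0 | ⟨u, v, hu, hpu, hv, hpv⟩
  · rw [hp0, piVal_zero] at hii
    exact not_pow_succ_dvd_sum_choose_of_natCast_eq_zero f hπ hcop hp0 ha hii hn hvpn hJ hjump hN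
  · rw [hpu, piVal_unit_mul_pow hπ hu] at hii
    exact not_pow_succ_dvd_sum_choose_of_natCast_eq_unit_mul_pow f hπ hcop hu hpu hv hpv ha ha0
      hii hn hvpn hJ hjump hN

end LeadingTerm

section PowerSeriesCoeff

open PowerSeries

variable {R : Type*} [CommRing R]

lemma coeff_mem_of_mem_span {S : Set R⟦X⟧} {I : Ideal R} {D : ℕ}
    (hS : ∀ g ∈ S, ∀ d ≤ D, coeff d g ∈ I) {f : R⟦X⟧} (hf : f ∈ Ideal.span S) :
    ∀ d ≤ D, coeff d f ∈ I := by
  induction hf using Submodule.span_induction with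
  | mem g hg => exact hS g hg
  | zero => simp
  | add f g _ _ hf hg => exact fun d hd => (map_add (coeff d) f g) ▸ I.add_mem (hf d hd) (hg d hd)
  | smul g f _ hf =>
    intro d hd
    rw [smul_eq_mul, coeff_mul]
    exact I.sum_mem fun q hq =>
      I.mul_mem_left _ (hf _ (by have := Finset.HasAntidiagonal.mem_antidiagonal.mp hq; omega))

lemma pow_succ_dvd_coeff_of_mem_span_mul {π : R} {p : ℕ} (hp : 1 < p) {ν J : ℕ} {E : ℕ → ℕ}
    (hE : ∀ e < J, E J < E e) {δ : R⟦X⟧}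
    (hδ : δ ∈ Ideal.span {C π, X} * Ideal.span {g | ∃ j ≤ ν, g = C (π ^ E j) * X ^ p ^ j}) :
    π ^ (E J + 1) ∣ coeff (p ^ J) δ := by
  rw [Ideal.span_mul_span'] at hδ
  rw [← Ideal.mem_span_singleton]
  refine coeff_mem_of_mem_span ?_ hδ _ le_rfl
  rintro _ ⟨x, hx, _, ⟨j, -, rfl⟩, rfl⟩ d hd
  dsimp only
  rw [Ideal.mem_span_singleton]
  rcases hx with rfl | rfl
  · rw [← mul_assoc, ← map_mul, coeff_C_mul_X_pow]
    split_ifs with h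
    · have hjJ : j ≤ J := (Nat.pow_le_pow_iff_right hp).mp (h ▸ hd)
      have hEj : E J ≤ E j := by
        rcases hjJ.eq_or_lt with rfl | hlt
        exacts [le_rfl, (hE j hlt).le]
      rw [← pow_succ']
      exact pow_dvd_pow π (by omega)
    · exact dvd_zero _
  · rw [mul_left_comm, ← pow_succ', coeff_C_mul_X_pow]
    split_ifs with h
    · have hjJ : j < J := (Nat.pow_lt_pow_iff_right hp).mp (by omega)
      exact pow_dvd_pow π (hE j hjJ)
    · exact dvd_zero _

lemma coeff_pow_C_mul_one_add_sum {p : ℕ} (hp : 1 < p) {ν J : ℕ} (hJ : J ≤ ν) (κ : R)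
    (g : ℕ → R) (δ : R⟦X⟧) :
    coeff (p ^ J) (C κ * (1 + ∑ j ∈ Finset.range (ν + 1), C (g j) * X ^ p ^ j + δ)) =
      κ * (g J + coeff (p ^ J) δ) := by
  simp [coeff_one, map_sum, Nat.pow_right_inj hp, (zero_lt_one.trans hp).ne', Nat.lt_succ_of_le hJ]

end PowerSeriesCoeff

open PowerSeries in
/-- `c = 0` is the case of `F̂(π_L(1 + ε))`, general `c` that of `Ĝ(π_M(1 + π_M^c ε))`. -/
theorem coeff_ne_zero_of_jump {p n ν : ℕ} [hp : Fact p.Prime] {A : Type*} [CommRing A]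
    {a : ℕ → A} {ii : ℕ → ℕ} {J : ℕ} {O : Type*} [CommRing O] [IsDomain O] (f : A →+* O)
    {π : O} (hπ : Irreducible π) (hcop : ∀ C : ℕ, ¬ p ∣ C → IsUnit (C : O))
    (hram : AbsRamificationDvd p π (p ^ ν)) (ha : ∀ t, a t ≠ 0 → IsUnit (a t)) (ha0 : a 0 ≠ 0)
    (hii : ∀ j ≤ ν, (ii j : ℕ∞) = insepIdx p n ν a (piVal π (p : O)) j)
    (hn : 0 < n) (hvpn : padicValNat p n = ν) (hJ : J ≤ ν) (c : ℕ) {E : ℕ → ℕ}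
    (hE : ∀ j, E j = ii j + p ^ j * c) (hjump : ∀ e < J, E J < E e)
    {κ : O} (hκ : Associated κ (π ^ n)) (r : ℕ → O) {δ : O⟦X⟧}
    (hδ : δ ∈ Ideal.span {C π, X} * Ideal.span {g | ∃ j ≤ ν, g = C (π ^ E j) * X ^ p ^ j})
    {Φ : O⟦X⟧}
    (hΦ : ∀ i N, coeff i Φ - π ^ (c * i) *
      ∑ t ∈ Finset.range N, f (a t) * π ^ (t + n) * ((t + n).choose i : O)
        ∈ Ideal.span {π ^ (n + N)})
    (hΦeq : Φ = C κ * (1 + ∑ j ∈ Finset.range (ν + 1), C (r j * π ^ E j) * X ^ p ^ j + δ)) :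
    r J ≠ 0 := by
  intro hrJ
  have hiijump : ∀ e < J, ii J < ii e := fun e he => by
    have h := hjump e he
    have : p ^ e * c ≤ p ^ J * c := Nat.mul_le_mul_right c (Nat.pow_le_pow_right hp.out.pos he.le)
    rw [hE, hE] at h
    omega
  have hcoeff : π ^ (n + E J + 1) ∣ coeff (p ^ J) Φ := by
    rw [hΦeq, coeff_pow_C_mul_one_add_sum hp.out.one_lt hJ, hrJ, zero_mul, zero_add, add_assoc,
      pow_add]
    exact mul_dvd_mul hκ.symm.dvd (pow_succ_dvd_coeff_of_mem_span_mul hp.out.one_lt hjump hδ)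
  have hsum : π ^ (c * p ^ J) * π ^ (n + ii J + 1) ∣ π ^ (c * p ^ J) *
      ∑ t ∈ Finset.range (E J + 1), f (a t) * π ^ (t + n) * ((t + n).choose (p ^ J) : O) := by
    rw [← pow_add, show c * p ^ J + (n + ii J + 1) = n + E J + 1 by rw [hE]; ring]
    simpa using dvd_sub hcoeff (Ideal.mem_span_singleton.mp (hΦ (p ^ J) (E J + 1)))
  exact not_pow_succ_dvd_sum_choose f hπ hcop hram ha ha0 hii hn hvpn hJ hiijump
    (by rw [hE]; omega) ((mul_dvd_mul_iff_left (pow_ne_zero _ hπ.ne_zero)).mp hsum)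

section TowerFunction

variable {p m ν μ l l₀ : ℕ} {iL iM : ℕ → ℕ} {c : ℕ}

lemma lamMK_lt (hT2 : ∀ a' < l₀, sSetMK p m iL iM ν μ l a' c = ∅) (hl₀ : l₀ ≤ l) {j k : ℕ}
    (hj : j ≤ ν) (hk : k ≤ μ) (hjk : j + k < l₀) :
    lamMK p m iL iM ν μ l c < m * iL j + p ^ j * (iM k + p ^ k * c) := by
  refine lt_of_le_of_ne (csInf_le ⟨0, ?_⟩ ⟨j, k, hj, hk, by omega, rfl⟩) fun h => ?_
  · rintro _ ⟨j', k', -, -, -, rfl⟩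
    positivity
  · have hmem : (j, k) ∈ sSetMK p m iL iM ν μ l (j + k) c := ⟨hj, hk, rfl, h.symm⟩
    rwa [hT2 _ hjk] at hmem

lemma iL_lt_of_mem_sSetMK (hT2 : ∀ a' < l₀, sSetMK p m iL iM ν μ l a' c = ∅) (hl₀ : l₀ ≤ l)
    {j k : ℕ} (hjk : (j, k) ∈ sSetMK p m iL iM ν μ l l₀ c) (hp : 1 ≤ p) {e : ℕ} (he : e < j) :
    iL j < iL e := by
  obtain ⟨hj, hk, rfl, heq⟩ := hjk
  have h := heq ▸ lamMK_lt hT2 hl₀ (by omega) hk (by omega : e + k < j + k)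
  by_contra! hle
  have h1 : (m : ℝ) * iL e ≤ m * iL j := by gcongr
  have h2 : (p : ℝ) ^ e ≤ p ^ j := pow_le_pow_right₀ (by exact_mod_cast hp) he.le
  have h3 : (p : ℝ) ^ e * (iM k + p ^ k * c) ≤ p ^ j * (iM k + p ^ k * c) := by gcongr
  linarith

lemma add_pow_mul_lt_of_mem_sSetMK (hT2 : ∀ a' < l₀, sSetMK p m iL iM ν μ l a' c = ∅)
    (hl₀ : l₀ ≤ l) {j k : ℕ} (hjk : (j, k) ∈ sSetMK p m iL iM ν μ l l₀ c) (hp : 0 < p) {e : ℕ}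
    (he : e < k) : iM k + p ^ k * c < iM e + p ^ e * c := by
  obtain ⟨hj, hk, rfl, heq⟩ := hjk
  have h := heq ▸ lamMK_lt hT2 hl₀ hj (by omega) (by omega : j + e < j + k)
  have h' := lt_of_mul_lt_mul_left (lt_of_add_lt_add_left h) (by positivity)
  exact_mod_cast h'

end TowerFunction

open PowerSeries in
theorem stmt15_general
    (p : ℕ) [hp : Fact p.Prime]
    (OK : Type) [CommRing OK] [IsDomain OK] [IsDiscreteValuationRing OK]
    [CharP (IsLocalRing.ResidueField OK) p]
    (OL : Type) [CommRing OL] [IsDomain OL] [IsDiscreteValuationRing OL]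
    [Algebra OK OL]
    (OM : Type) [CommRing OM] [IsDomain OM]
    [Algebra OL OM] [Algebra OK OM]
    -- degrees
    (n a ν : ℕ) (hna : n = a * p ^ ν) (hpa : ¬ p ∣ a) (hn1 : 1 < n)
    (m b μ : ℕ) (hmb : m = b * p ^ μ) (hpb : ¬ p ∣ b) (hm1 : 1 < m)
    -- uniformizers, total ramification
    (πK : OK) (hπK : Irreducible πK) (πL : OL) (hπL : Irreducible πL)
    (πM : OM) (hπM : Irreducible πM)
    (htot : Associated (algebraMap OK OL πK) (πL ^ n))
    (htotM : Associated (algebraMap OL OM πL) (πM ^ m))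
    -- Teichmüller representatives of O_K and O_L
    (TR : Set OK) (hTR0 : (0 : OK) ∈ TR)
    (hTRbij : Set.BijOn (IsLocalRing.residue OK) TR Set.univ)
    (TRL : Set OL) (hTRL0 : (0 : OL) ∈ TRL)
    (hTRLbij : Set.BijOn (IsLocalRing.residue OL) TRL Set.univ)
    -- F̂ : expansion of π_K in π_L, and the indices i_j of L/K
    (aF : ℕ → OK) (haF : ∀ h, aF h ∈ TR)
    (hFeval : ∀ N : ℕ,
      algebraMap OK OL πK - ∑ h ∈ Finset.range N, algebraMap OK OL (aF h) * πL ^ (h + n)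
        ∈ Ideal.span {πL ^ (n + N)})
    (iL : ℕ → ℕ)
    (hiL : ∀ j ≤ ν, (iL j : ℕ∞) = insepIdx p n ν aF (piVal πL (p : OL)) j)
    -- Ĝ : expansion of π_L in π_M, and the indices i'_k of M/L
    (aG : ℕ → OL) (haG : ∀ h, aG h ∈ TRL)
    (hGeval : ∀ N : ℕ,
      algebraMap OL OM πL - ∑ h ∈ Finset.range N, algebraMap OL OM (aG h) * πM ^ (h + m)
        ∈ Ideal.span {πM ^ (m + N)})
    (iM : ℕ → ℕ)
    (hiM : ∀ k ≤ μ, (iM k : ℕ∞) = insepIdx p m μ aG (piVal πM (p : OM)) k)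
    -- c ∈ T_l(M/K), with the corresponding l₀ and the unique pair (j,k) ∈ Ω_{l₀}
    (l : ℕ) (c : ℕ)
    (l0 : ℕ) (hl0 : l0 ≤ l)
    (hT2 : ∀ a' < l0, sSetMK p m iL iM ν μ l a' (c : ℝ) = ∅)
    (j k : ℕ) (hjk : ((j, k) : ℕ × ℕ) ∈ sSetMK p m iL iM ν μ l l0 (c : ℝ))
    -- the coefficients r_{j'}, s_{k'} ∈ R and the error terms δ_F, δ_G
    (r : ℕ → OK)
    (s : ℕ → OK)
    (δF : PowerSeries OL)
    (hδF : δF ∈ Ideal.span {(C (R := OL)) πL, (X : PowerSeries OL)} *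
      Ideal.span {f : PowerSeries OL | ∃ j' ≤ ν,
        f = (C (R := OL)) (πL ^ iL j') * (X : PowerSeries OL) ^ (p ^ j')})
    (δG : PowerSeries OM)
    (hδG : δG ∈ Ideal.span {(C (R := OM)) πM, (X : PowerSeries OM)} *
      Ideal.span {f : PowerSeries OM | ∃ k' ≤ μ,
        f = (C (R := OM)) (πM ^ (iM k' + p ^ k' * c)) * (X : PowerSeries OM) ^ (p ^ k')})
    -- FF = F̂(π_L(1+ε)) ∈ O_L[[ε]], coefficientwise (as a π_L-adic limit)
    (FF : PowerSeries OL)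
    (hFFcoeff : ∀ i N : ℕ,
      PowerSeries.coeff (R := OL) i FF
          - ∑ t ∈ Finset.range N,
              algebraMap OK OL (aF t) * πL ^ (t + n) * ((t + n).choose i : OL)
        ∈ Ideal.span {πL ^ (n + N)})
    (hFFeq : FF = (C (R := OL)) (algebraMap OK OL πK) *
      (1 + ∑ j' ∈ Finset.range (ν + 1),
          (C (R := OL)) (algebraMap OK OL (r j') * πL ^ iL j') * (X : PowerSeries OL) ^ (p ^ j')
        + δF))
    -- GG = Ĝ(π_M(1+π_M^c ε)) ∈ O_M[[ε]], coefficientwise (as a π_M-adic limit)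
    (GG : PowerSeries OM)
    (hGGcoeff : ∀ i N : ℕ,
      PowerSeries.coeff (R := OM) i GG
          - πM ^ (c * i) * ∑ t ∈ Finset.range N,
              algebraMap OL OM (aG t) * πM ^ (t + m) * ((t + m).choose i : OM)
        ∈ Ideal.span {πM ^ (m + N)})
    (hGGeq : GG = (C (R := OM)) (algebraMap OL OM πL) *
      (1 + ∑ k' ∈ Finset.range (μ + 1),
          (C (R := OM)) (algebraMap OK OM (s k') * πM ^ (iM k' + p ^ k' * c))
            * (X : PowerSeries OM) ^ (p ^ k')
        + δG)) :
    r j ≠ 0 ∧ s k ≠ 0 := by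
  obtain ⟨hjν, hkμ, -⟩ := id hjk
  have hvpn : padicValNat p n = ν := hna ▸ padicValNat_mul_pow_of_not_dvd_s15 hpa
  have hvpm : padicValNat p m = μ := hmb ▸ padicValNat_mul_pow_of_not_dvd_s15 hpb
  have hcopL (C : ℕ) (hC : ¬ p ∣ C) : IsUnit (C : OL) := by
    simpa using (isUnit_natCast_of_not_dvd (A := OK) hC).map (algebraMap OK OL)
  have hcopM (C : ℕ) (hC : ¬ p ∣ C) : IsUnit (C : OM) := by
    simpa using (hcopL C hC).map (algebraMap OL OM)
  have hramL :=
    (AbsRamificationDvd.of_charP_residueField hπK).map (algebraMap OK OL) (by omega) htot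
  have hramM := hramL.map (algebraMap OL OM) (by omega) htotM
  have haFu (t) := isUnit_of_injOn_residue hTR0 hTRbij.injOn (haF t)
  have haGu (t) := isUnit_of_injOn_residue hTRL0 hTRLbij.injOn (haG t)
  have haF0 : aF 0 ≠ 0 := fun h0 =>
    ne_zero_of_sub_mul_pow_mem hπL htot (by simpa using hFeval 1) (by simp [h0])
  have haG0 : aG 0 ≠ 0 := fun h0 =>
    ne_zero_of_sub_mul_pow_mem hπM htotM (by simpa using hGeval 1) (by simp [h0])
  refine ⟨fun hrj => ?_, fun hsk => ?_⟩
  · exact coeff_ne_zero_of_jump (algebraMap OK OL) hπL hcopL (hramL.mono (by simp [hna]))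
      haFu haF0 hiL (by omega) hvpn hjν 0 (E := iL) (fun _ => by simp)
      (fun e he => iL_lt_of_mem_sSetMK hT2 hl0 hjk hp.out.one_lt.le he) htot
      (fun j => algebraMap OK OL (r j)) hδF (fun i N => by simpa using hFFcoeff i N) hFFeq
      (by simp [hrj])
  · exact coeff_ne_zero_of_jump (algebraMap OL OM) hπM hcopM
      (hramM.mono (hmb ▸ (dvd_mul_left _ b).mul_left _)) haGu haG0 hiM (by omega) hvpm hkμ c
      (E := fun k => iM k + p ^ k * c) (fun _ => rfl)
      (fun e he => add_pow_mul_lt_of_mem_sSetMK hT2 hl0 hjk hp.out.pos he) htotM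
      (fun k => algebraMap OK OM (s k)) hδG hGGcoeff hGGeq (by simp [hsk])

open PowerSeries in
/-- Lemma `rjsk`.  Let `c ∈ ℕ₀ ∩ T_l(M/K)`, let `l₀` be the integer
specified in the definition of `T_l(M/K)` for `t = c`, and let `(j,k)` be the unique
element of `Ω_{l₀}` with `λ^l_{M/K}(c) = φ̃^{j,m}_{L/K}(φ̃^k_{M/L}(c))`.  If
`r_0, …, r_ν, s_0, …, s_μ ∈ R`, `δ_F ∈ (π_L,ε)·I_F`, `δ_G ∈ (π_M,ε)·I'_G` satisfy
`F̂(π_L(1+ε)) = π_K·(1 + Σ_{j'} r_{j'} π_L^{i_{j'}} ε^{p^{j'}} + δ_F)` and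
`Ĝ(π_M(1+π_M^c ε)) = π_L·(1 + Σ_{k'} s_{k'} π_M^{φ̃^{k'}_{M/L}(c)} ε^{p^{k'}} + δ_G)`,
then `r_j ≠ 0` and `s_k ≠ 0`. -/
theorem stmt15
    (p : ℕ) [hp : Fact p.Prime]
    (OK : Type) [CommRing OK] [IsDomain OK] [IsDiscreteValuationRing OK]
    [IsAdicComplete (IsLocalRing.maximalIdeal OK) OK]
    [CharP (IsLocalRing.ResidueField OK) p] [PerfectRing (IsLocalRing.ResidueField OK) p]
    (OL : Type) [CommRing OL] [IsDomain OL] [IsDiscreteValuationRing OL]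
    [IsAdicComplete (IsLocalRing.maximalIdeal OL) OL]
    [Algebra OK OL]
    (OM : Type) [CommRing OM] [IsDomain OM] [IsDiscreteValuationRing OM]
    [IsAdicComplete (IsLocalRing.maximalIdeal OM) OM]
    [Algebra OL OM] [Algebra OK OM] [IsScalarTower OK OL OM]
    (K L M : Type) [Field K] [Field L] [Field M]
    [Algebra OK K] [IsFractionRing OK K]
    [Algebra OL L] [IsFractionRing OL L]
    [Algebra OM M] [IsFractionRing OM M]
    [Algebra K L] [Algebra OK L] [IsScalarTower OK K L] [IsScalarTower OK OL L]
    [Algebra L M] [Algebra OL M] [IsScalarTower OL L M] [IsScalarTower OL OM M]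
    [Algebra K M] [IsScalarTower K L M]
    [Algebra.IsSeparable K L] [FiniteDimensional K L]
    [Algebra.IsSeparable L M] [FiniteDimensional L M]
    [Algebra.IsSeparable K M]
    -- degrees
    (n a ν : ℕ) (hna : n = a * p ^ ν) (hpa : ¬ p ∣ a) (hn1 : 1 < n)
    (hdeg : Module.finrank K L = n)
    (m b μ : ℕ) (hmb : m = b * p ^ μ) (hpb : ¬ p ∣ b) (hm1 : 1 < m)
    (hdegM : Module.finrank L M = m)
    -- uniformizers, total ramification
    (πK : OK) (hπK : Irreducible πK) (πL : OL) (hπL : Irreducible πL)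
    (πM : OM) (hπM : Irreducible πM)
    (htot : Associated (algebraMap OK OL πK) (πL ^ n))
    (hres : ∀ x : OL, ∃ y : OK, x - algebraMap OK OL y ∈ IsLocalRing.maximalIdeal OL)
    (htotM : Associated (algebraMap OL OM πL) (πM ^ m))
    (hresM : ∀ x : OM, ∃ y : OL, x - algebraMap OL OM y ∈ IsLocalRing.maximalIdeal OM)
    -- Teichmüller representatives of O_K and O_L
    (TR : Set OK) (hTR0 : (0 : OK) ∈ TR)
    (hTRbij : Set.BijOn (IsLocalRing.residue OK) TR Set.univ)
    (hTRmul : ∀ r ∈ TR, ∀ s ∈ TR, r * s ∈ TR)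
    (TRL : Set OL) (hTRL0 : (0 : OL) ∈ TRL)
    (hTRLbij : Set.BijOn (IsLocalRing.residue OL) TRL Set.univ)
    (hTRLmul : ∀ r ∈ TRL, ∀ s ∈ TRL, r * s ∈ TRL)
    -- F̂ : expansion of π_K in π_L, and the indices i_j of L/K
    (aF : ℕ → OK) (haF : ∀ h, aF h ∈ TR)
    (hFeval : ∀ N : ℕ,
      algebraMap OK OL πK - ∑ h ∈ Finset.range N, algebraMap OK OL (aF h) * πL ^ (h + n)
        ∈ Ideal.span {πL ^ (n + N)})
    (iL : ℕ → ℕ)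
    (hiL : ∀ j ≤ ν, (iL j : ℕ∞) = insepIdx p n ν aF (piVal πL (p : OL)) j)
    -- Ĝ : expansion of π_L in π_M, and the indices i'_k of M/L
    (aG : ℕ → OL) (haG : ∀ h, aG h ∈ TRL)
    (hGeval : ∀ N : ℕ,
      algebraMap OL OM πL - ∑ h ∈ Finset.range N, algebraMap OL OM (aG h) * πM ^ (h + m)
        ∈ Ideal.span {πM ^ (m + N)})
    (iM : ℕ → ℕ)
    (hiM : ∀ k ≤ μ, (iM k : ℕ∞) = insepIdx p m μ aG (piVal πM (p : OM)) k)
    -- Ĥ : expansion of π_K in π_M, and the indices i''_l of M/K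
    (aH : ℕ → OK) (haH : ∀ h, aH h ∈ TR)
    (hHeval : ∀ N : ℕ,
      algebraMap OK OM πK
          - ∑ h ∈ Finset.range N, algebraMap OK OM (aH h) * πM ^ (h + n * m)
        ∈ Ideal.span {πM ^ (n * m + N)})
    (iMK : ℕ → ℕ)
    (hiMK : ∀ l ≤ ν + μ, (iMK l : ℕ∞) = insepIdx p (n * m) (ν + μ) aH (piVal πM (p : OM)) l)
    -- c ∈ T_l(M/K), with the corresponding l₀ and the unique pair (j,k) ∈ Ω_{l₀}
    (l : ℕ) (hl : l ≤ ν + μ) (c : ℕ)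
    (l0 : ℕ) (hl0 : l0 ≤ l)
    (hT1 : ∃! jk : ℕ × ℕ, jk ∈ sSetMK p m iL iM ν μ l l0 (c : ℝ))
    (hT2 : ∀ a' < l0, sSetMK p m iL iM ν μ l a' (c : ℝ) = ∅)
    (j k : ℕ) (hjk : ((j, k) : ℕ × ℕ) ∈ sSetMK p m iL iM ν μ l l0 (c : ℝ))
    -- the coefficients r_{j'}, s_{k'} ∈ R and the error terms δ_F, δ_G
    (r : ℕ → OK) (hr : ∀ j' ≤ ν, r j' ∈ TR)
    (s : ℕ → OK) (hs : ∀ k' ≤ μ, s k' ∈ TR)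
    (δF : PowerSeries OL)
    (hδF : δF ∈ Ideal.span {(C (R := OL)) πL, (X : PowerSeries OL)} *
      Ideal.span {f : PowerSeries OL | ∃ j' ≤ ν,
        f = (C (R := OL)) (πL ^ iL j') * (X : PowerSeries OL) ^ (p ^ j')})
    (δG : PowerSeries OM)
    (hδG : δG ∈ Ideal.span {(C (R := OM)) πM, (X : PowerSeries OM)} *
      Ideal.span {f : PowerSeries OM | ∃ k' ≤ μ,
        f = (C (R := OM)) (πM ^ (iM k' + p ^ k' * c)) * (X : PowerSeries OM) ^ (p ^ k')})
    -- FF = F̂(π_L(1+ε)) ∈ O_L[[ε]], coefficientwise (as a π_L-adic limit)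
    (FF : PowerSeries OL)
    (hFFcoeff : ∀ i N : ℕ,
      PowerSeries.coeff (R := OL) i FF
          - ∑ t ∈ Finset.range N,
              algebraMap OK OL (aF t) * πL ^ (t + n) * ((t + n).choose i : OL)
        ∈ Ideal.span {πL ^ (n + N)})
    (hFFeq : FF = (C (R := OL)) (algebraMap OK OL πK) *
      (1 + ∑ j' ∈ Finset.range (ν + 1),
          (C (R := OL)) (algebraMap OK OL (r j') * πL ^ iL j') * (X : PowerSeries OL) ^ (p ^ j')
        + δF))
    -- GG = Ĝ(π_M(1+π_M^c ε)) ∈ O_M[[ε]], coefficientwise (as a π_M-adic limit)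
    (GG : PowerSeries OM)
    (hGGcoeff : ∀ i N : ℕ,
      PowerSeries.coeff (R := OM) i GG
          - πM ^ (c * i) * ∑ t ∈ Finset.range N,
              algebraMap OL OM (aG t) * πM ^ (t + m) * ((t + m).choose i : OM)
        ∈ Ideal.span {πM ^ (m + N)})
    (hGGeq : GG = (C (R := OM)) (algebraMap OL OM πL) *
      (1 + ∑ k' ∈ Finset.range (μ + 1),
          (C (R := OM)) (algebraMap OK OM (s k') * πM ^ (iM k' + p ^ k' * c))
            * (X : PowerSeries OM) ^ (p ^ k')
        + δG)) :
    r j ≠ 0 ∧ s k ≠ 0 :=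
  stmt15_general p (hp := hp) OK OL OM n a ν hna hpa hn1 m b μ hmb hpb hm1 πK hπK πL hπL πM hπM htot
    htotM TR hTR0 hTRbij TRL hTRL0 hTRLbij aF haF hFeval iL hiL aG haG hGeval iM hiM l c l0 hl0 hT2
    j k hjk r s δF hδF δG hδG FF hFFcoeff hFFeq GG hGGcoeff hGGeq
end
end
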